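/- Let A be a first-order alternating automaton and α = a₁…aₙ an input event sequence. For each valuation ν of the time-stamped input variables X^{(≤n)}: there exists an interpretation I such that I, ν ⊨ Θ̂(α) if and only if ν ⊨ Φ̂(α), where Θ̂(α) is the path-quantifier-eliminated form of the acceptance formula and Φ̂(α) is the predicate-free formula obtained by substitution of transition formulas for predicate atoms. -/

import Mathlib

set_option maxHeartbeats 1000000
set_option autoImplicit false

open scoped Classical

noncomputable section

namespace FOADA

/-! ### Terms over a data domain `D` (all function symbols have a fixed interpretation) -/

inductive Term (D : Type) (V : Type) : Type where
  | var : V → Term D V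
  | app : {n : ℕ} → ((Fin n → D) → D) → (Fin n → Term D V) → Term D V

namespace Term

variable {D V W : Type}

def eval (ν : V → D) : Term D V → D
  | var v => ν v
  | app f ts => f fun i => (ts i).eval ν

def rename (f : V → W) : Term D V → Term D W
  | var v => var (f v)
  | app g ts => app g fun i => (ts i).rename f

def subst (σ : V → Term D W) : Term D V → Term D W
  | var v => σ v
  | app g ts => app g fun i => (ts i).subst σ

def vars : Term D V → Set V
  | var v => {v}
  | app _ ts => ⋃ i, (ts i).vars

def const (d : D) : Term D V := app (n := 0) (fun _ => d) Fin.elim0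

end Term

/-! ### Interpretations, configurations and cubes -/

def Interp (D Q : Type) (ar : Q → ℕ) : Type := ∀ q : Q, Set (Fin (ar q) → D)

def Interp.le {D Q : Type} {ar : Q → ℕ} (I J : Interp D Q ar) : Prop := ∀ q, I q ⊆ J q

/-- Configurations `q(d₁,…,d_{#q})`. -/
def Config (D Q : Type) (ar : Q → ℕ) : Type := Σ q : Q, Fin (ar q) → D

/-- The cube of an interpretation. -/
def Interp.cube {D Q : Type} {ar : Q → ℕ} (I : Interp D Q ar) : Set (Config D Q ar) :=
  {c | c.2 ∈ I c.1}

/-! ### First-order formulas with uninterpreted predicate symbols -/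

inductive Fml (D Q : Type) (ar : Q → ℕ) : Type → Type 1 where
  | eq : {V : Type} → Term D V → Term D V → Fml D Q ar V
  | pred : {V : Type} → (q : Q) → (Fin (ar q) → Term D V) → Fml D Q ar V
  | not : {V : Type} → Fml D Q ar V → Fml D Q ar V
  | and : {V : Type} → Fml D Q ar V → Fml D Q ar V → Fml D Q ar V
  | ex : {V : Type} → Fml D Q ar (Option V) → Fml D Q ar V

namespace Fml

variable {D Q : Type} {ar : Q → ℕ}

/-- The satisfaction relation `I, ν ⊨ φ`. -/
def Sat (I : Interp D Q ar) : {V : Type} → Fml D Q ar V → (V → D) → Prop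
  | _, .eq t s, ν => t.eval ν = s.eval ν
  | _, .pred q ts, ν => (fun i => (ts i).eval ν) ∈ I q
  | _, .not φ, ν => ¬ Sat I φ ν
  | _, .and φ ψ, ν => Sat I φ ν ∧ Sat I ψ ν
  | _, .ex φ, ν => ∃ d : D, Sat I φ fun o => o.elim d ν

def tt [Nonempty D] {V : Type} : Fml D Q ar V :=
  .eq (Term.const (Classical.arbitrary D)) (Term.const (Classical.arbitrary D))

def ff [Nonempty D] {V : Type} : Fml D Q ar V := .not tt

def or {V : Type} (φ ψ : Fml D Q ar V) : Fml D Q ar V := .not (.and (.not φ) (.not ψ))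

def imp {V : Type} (φ ψ : Fml D Q ar V) : Fml D Q ar V := .not (.and φ (.not ψ))

def all {V : Type} (φ : Fml D Q ar (Option V)) : Fml D Q ar V := .not (.ex (.not φ))

def conj [Nonempty D] {V : Type} : List (Fml D Q ar V) → Fml D Q ar V
  | [] => tt
  | φ :: l => .and φ (conj l)

def disj [Nonempty D] {V : Type} : List (Fml D Q ar V) → Fml D Q ar V
  | [] => ff
  | φ :: l => or φ (disj l)

def rename : {V W : Type} → (V → W) → Fml D Q ar V → Fml D Q ar W
  | _, _, f, .eq t s => .eq (t.rename f) (s.rename f)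
  | _, _, f, .pred q ts => .pred q fun i => (ts i).rename f
  | _, _, f, .not φ => .not (rename f φ)
  | _, _, f, .and φ ψ => .and (rename f φ) (rename f ψ)
  | _, _, f, .ex φ => .ex (rename (Option.map f) φ)

def substVar : {V W : Type} → (V → Term D W) → Fml D Q ar V → Fml D Q ar W
  | _, _, σ, .eq t s => .eq (t.subst σ) (s.subst σ)
  | _, _, σ, .pred q ts => .pred q fun i => (ts i).subst σ
  | _, _, σ, .not φ => .not (substVar σ φ)
  | _, _, σ, .and φ ψ => .and (substVar σ φ) (substVar σ ψ)
  | _, _, σ, .ex φ =>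
      .ex (substVar (fun o => Option.elim o (.var none) fun v => (σ v).rename some) φ)

/-- Existential quantification of a block of variables. -/
def exN : {V : Type} → {k : ℕ} → Fml D Q ar (V ⊕ Fin k) → Fml D Q ar V
  | _, 0, φ => φ.rename (Sum.elim id Fin.elim0)
  | _, k + 1, φ =>
      exN (k := k) (.ex (φ.rename fun v =>
        match v with
        | Sum.inl v => some (Sum.inl v)
        | Sum.inr j => Fin.lastCases none (fun i => some (Sum.inr i)) j))

/-- Universal quantification of a block of variables. -/
def allN {V : Type} {k : ℕ} (φ : Fml D Q ar (V ⊕ Fin k)) : Fml D Q ar V :=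
  .not (exN (.not φ))

/-- `Polarity φ b` : every predicate occurrence in `φ` has polarity `b`
(`b = true` : under an even number of negations). -/
def Polarity : {V : Type} → Fml D Q ar V → Bool → Prop
  | _, .eq _ _, _ => True
  | _, .pred _ _, b => b = true
  | _, .not φ, b => Polarity φ (!b)
  | _, .and φ ψ, b => Polarity φ b ∧ Polarity ψ b
  | _, .ex φ, b => Polarity φ b

/-- A formula is positive if every predicate symbol occurs under an even number of negations. -/
def Positive {V : Type} (φ : Fml D Q ar V) : Prop := φ.Polarity true

/-- Free variables of a formula. -/
def fv : {V : Type} → Fml D Q ar V → Set V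
  | _, .eq t s => t.vars ∪ s.vars
  | _, .pred _ ts => ⋃ i, (ts i).vars
  | _, .not φ => fv φ
  | _, .and φ ψ => fv φ ∪ fv ψ
  | _, .ex φ => {v | some v ∈ fv φ}

/-- Predicate symbols occurring in a formula. -/
def preds : {V : Type} → Fml D Q ar V → Set Q
  | _, .eq _ _ => ∅
  | _, .pred q _ => {q}
  | _, .not φ => preds φ
  | _, .and φ ψ => preds φ ∪ preds ψ
  | _, .ex φ => preds φ

/-- Predicate symbols occurring with polarity `b` (`true` = even number of negations). -/
def predsPol : Bool → {V : Type} → Fml D Q ar V → Set Q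
  | _, _, .eq _ _ => ∅
  | b, _, .pred q _ => if b then {q} else ∅
  | b, _, .not φ => predsPol (!b) φ
  | b, _, .and φ ψ => predsPol b φ ∪ predsPol b ψ
  | b, _, .ex φ => predsPol b φ

/-- Number of predicate atom occurrences. -/
def atomCount : {V : Type} → Fml D Q ar V → ℕ
  | _, .eq _ _ => 0
  | _, .pred _ _ => 1
  | _, .not φ => atomCount φ
  | _, .and φ ψ => atomCount φ + atomCount ψ
  | _, .ex φ => atomCount φ

/-- No predicate atom with symbol `q0` occurs. -/
def noPredOcc (q0 : Q) : {V : Type} → Fml D Q ar V → Prop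
  | _, .eq _ _ => True
  | _, .pred q _ => q ≠ q0
  | _, .not φ => noPredOcc q0 φ
  | _, .and φ ψ => noPredOcc q0 φ ∧ noPredOcc q0 ψ
  | _, .ex φ => noPredOcc q0 φ

/-- The size of a formula. -/
def size : {V : Type} → Fml D Q ar V → ℕ
  | _, .eq _ _ => 1
  | _, .pred _ _ => 1
  | _, .not φ => size φ + 1
  | _, .and φ ψ => size φ + size ψ + 1
  | _, .ex φ => size φ + 1

/-- The dual of a (positive) formula. -/
def dual : {V : Type} → Fml D Q ar V → Fml D Q ar V
  | _, .eq t s => .not (.eq t s)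
  | _, .pred q ts => .pred q ts
  | _, .not φ => .not (dual φ)
  | _, .and φ ψ => or (dual φ) (dual ψ)
  | _, .ex φ => .not (.ex (.not (dual φ)))

/-- Map predicate symbols along an arity-preserving function. -/
def mapPred {Q' : Type} {ar' : Q' → ℕ} (f : Q → Q') (h : ∀ q, ar' (f q) = ar q) :
    {V : Type} → Fml D Q ar V → Fml D Q' ar' V
  | _, .eq t s => .eq t s
  | _, .pred q ts => .pred (f q) fun i => ts (Fin.cast (h q) i)
  | _, .not φ => .not (mapPred f h φ)
  | _, .and φ ψ => .and (mapPred f h φ) (mapPred f h ψ)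
  | _, .ex φ => .ex (mapPred f h φ)

/-- Substitute, for every predicate atom `q(t̄)`, the formula `σ q` with parameters
instantiated by `t̄` (plus a fixed set `V0` of "global" variables embedded by `ρ`). -/
def substPred {Q' : Type} {ar' : Q' → ℕ} {V0 : Type}
    (σ : ∀ q : Q, Fml D Q' ar' (V0 ⊕ Fin (ar q))) :
    {V : Type} → (V0 → V) → Fml D Q ar V → Fml D Q' ar' V
  | _, _, .eq t s => .eq t s
  | _, ρ, .pred q ts => (σ q).substVar (Sum.elim (fun v0 => .var (ρ v0)) fun i => ts i)
  | _, ρ, .not φ => .not (substPred σ ρ φ)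
  | _, ρ, .and φ ψ => .and (substPred σ ρ φ) (substPred σ ρ ψ)
  | _, ρ, .ex φ => .ex (substPred σ (fun v0 => some (ρ v0)) φ)

/-- Replace, in place, every atom of the single predicate `q0` by the instance of `ψ`;
all other predicate atoms are kept. -/
def replaceP [DecidableEq Q] (q0 : Q) {V0 : Type} (ψ : Fml D Q ar (V0 ⊕ Fin (ar q0))) :
    {V : Type} → (V0 → V) → Fml D Q ar V → Fml D Q ar V
  | _, _, .eq t s => .eq t s
  | _, ρ, .pred q ts =>
      if h : q = q0 then
        ψ.substVar (Sum.elim (fun v0 => .var (ρ v0))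
          fun i => ts (Fin.cast (congrArg ar h.symm) i))
      else .pred q ts
  | _, ρ, .not φ => .not (replaceP q0 ψ ρ φ)
  | _, ρ, .and φ ψ' => .and (replaceP q0 ψ ρ φ) (replaceP q0 ψ ρ ψ')
  | _, ρ, .ex φ => .ex (replaceP q0 ψ (fun v0 => some (ρ v0)) φ)

end Fml

/-- Minimal models of a formula under a valuation. -/
def MinModels {D Q : Type} {ar : Q → ℕ} {V : Type} (φ : Fml D Q ar V) (ν : V → D) :
    Set (Interp D Q ar) :=
  {I | φ.Sat I ν ∧ ∀ J : Interp D Q ar, φ.Sat J ν → J.le I → J = I}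


/-! ### Polarity lemmas (used to discharge positivity side conditions) -/

namespace Fml

variable {D Q : Type} {ar : Q → ℕ}

theorem polarity_tt [Nonempty D] {V : Type} (_b : Bool) : (tt : Fml D Q ar V).Polarity _b :=
  trivial

theorem polarity_ff [Nonempty D] {V : Type} (_b : Bool) : (ff : Fml D Q ar V).Polarity _b :=
  trivial

theorem polarity_or {V : Type} {φ ψ : Fml D Q ar V} {b : Bool}
    (h1 : φ.Polarity b) (h2 : ψ.Polarity b) : (or φ ψ).Polarity b := by
  simpa [or, Polarity, Bool.not_not] using And.intro h1 h2

theorem polarity_conj [Nonempty D] {V : Type} :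
    ∀ (l : List (Fml D Q ar V)) (b : Bool), (∀ φ ∈ l, φ.Polarity b) → (conj l).Polarity b
  | [], _, _ => trivial
  | φ :: l, b, h =>
      ⟨h φ List.mem_cons_self,
        polarity_conj l b fun ψ hψ => h ψ (List.mem_cons_of_mem _ hψ)⟩

theorem polarity_disj [Nonempty D] {V : Type} :
    ∀ (l : List (Fml D Q ar V)) (b : Bool), (∀ φ ∈ l, φ.Polarity b) → (disj l).Polarity b
  | [], _, _ => trivial
  | φ :: l, b, h =>
      polarity_or (h φ List.mem_cons_self)
        (polarity_disj l b fun ψ hψ => h ψ (List.mem_cons_of_mem _ hψ))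

theorem polarity_rename :
    ∀ {V W : Type} (f : V → W) (φ : Fml D Q ar V) (b : Bool),
      φ.Polarity b → (φ.rename f).Polarity b
  | _, _, _, .eq _ _, _, _ => trivial
  | _, _, _, .pred _ _, _, hb => hb
  | _, _, f, .not φ, b, hb => polarity_rename f φ (!b) hb
  | _, _, f, .and φ ψ, b, hb =>
      ⟨polarity_rename f φ b hb.1, polarity_rename f ψ b hb.2⟩
  | _, _, f, .ex φ, b, hb => polarity_rename (Option.map f) φ b hb

theorem polarity_mapPred {Q' : Type} {ar' : Q' → ℕ} (f : Q → Q') (h : ∀ q, ar' (f q) = ar q) :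
    ∀ {V : Type} (φ : Fml D Q ar V) (b : Bool), φ.Polarity b → (φ.mapPred f h).Polarity b
  | _, .eq _ _, _, _ => trivial
  | _, .pred _ _, _, hb => hb
  | _, .not φ, b, hb => polarity_mapPred f h φ (!b) hb
  | _, .and φ ψ, b, hb =>
      ⟨polarity_mapPred f h φ b hb.1, polarity_mapPred f h ψ b hb.2⟩
  | _, .ex φ, b, hb => polarity_mapPred f h φ b hb

theorem polarity_dual :
    ∀ {V : Type} (φ : Fml D Q ar V) (b : Bool), φ.Polarity b → (φ.dual).Polarity b
  | _, .eq _ _, _, _ => trivial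
  | _, .pred _ _, _, hb => hb
  | _, .not φ, b, hb => polarity_dual φ (!b) hb
  | _, .and φ ψ, b, hb => by
      have h1 := polarity_dual φ b hb.1
      have h2 := polarity_dual ψ b hb.2
      simpa [dual, or, Polarity, Bool.not_not] using And.intro h1 h2
  | _, .ex φ, b, hb => by
      have h := polarity_dual φ b hb
      simpa [dual, Polarity, Bool.not_not] using h

end Fml

/-! ### First-order alternating automata -/

/-- Data words over input events `Sig` and input variables `X`. -/
abbrev DWord (Sig X D : Type) := List (Sig × (X → D))

/-- A first-order alternating automaton `A = ⟨Σ, X, Q, ι, F, Δ⟩`.  The (finitely many)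
control predicates are the inhabitants of `Q`, enumerated by `QList`; there is exactly one
transition rule `q(y₁,…,y_{#q}) →^{a(X)} δ q a` per pair `(q,a)` (several rules can be
joined by disjunction, a missing rule is an unsatisfiable one). -/
structure FOAA (Sig X D : Type) : Type 1 where
  Q : Type
  QList : List Q
  QList_mem : ∀ q : Q, q ∈ QList
  ar : Q → ℕ
  init : Fml D Q ar Empty
  init_pos : init.Positive
  F : Set Q
  delta : (q : Q) → Sig → Fml D Q ar (X ⊕ Fin (ar q))
  delta_pos : ∀ q a, (delta q a).Positive

namespace FOAA

variable {Sig X D : Type} (A : FOAA Sig X D)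

abbrev Cfg := Config D A.Q A.ar

/-- An execution of `A` over the data word `w`, starting with the cube `c`, represented as
the (prefix-closed) set of its paths of configurations.  The children of each node at
level `j < |w|` form a cube of a minimal model of the corresponding transition formula. -/
structure IsExec (w : DWord Sig X D) (c : Set A.Cfg) (T : Set (List A.Cfg)) : Prop where
  not_nil : [] ∉ T
  prefix_closed : ∀ p ∈ T, ∀ p' : List A.Cfg, p' ≠ [] → p' <+: p → p' ∈ T
  roots : {cf : A.Cfg | [cf] ∈ T} = c
  depth : ∀ p ∈ T, p.length ≤ w.length + 1
  children : ∀ (p : List A.Cfg) (q : A.Q) (d : Fin (A.ar q) → D),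
    p ++ [⟨q, d⟩] ∈ T → ∀ hl : p.length < w.length,
    ∃ I ∈ MinModels (A.delta q (w.get ⟨p.length, hl⟩).1)
        (Sum.elim (w.get ⟨p.length, hl⟩).2 d),
      {cf : A.Cfg | (p ++ [⟨q, d⟩]) ++ [cf] ∈ T} = I.cube

/-- An accepting execution: all paths have length `|w|` and the frontier is labeled with
final configurations. -/
structure IsAccExec (w : DWord Sig X D) (c : Set A.Cfg) (T : Set (List A.Cfg))
    extends A.IsExec w c T : Prop where
  total : ∀ p ∈ T, p.length ≤ w.length → ∃ cf : A.Cfg, p ++ [cf] ∈ T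
  final : ∀ (p : List A.Cfg) (q : A.Q) (d : Fin (A.ar q) → D),
    p ++ [⟨q, d⟩] ∈ T → p.length = w.length → q ∈ A.F

/-- `A` accepts `w` iff it has an accepting execution over `w` starting with a cube of a
minimal model of the initial sentence. -/
def Accepts (w : DWord Sig X D) : Prop :=
  ∃ I ∈ MinModels A.init (fun v : Empty => v.elim),
    ∃ T : Set (List A.Cfg), A.IsAccExec w I.cube T

def Lang : Set (DWord Sig X D) := {w | A.Accepts w}

end FOAA

/-! ### Time-stamping and path formulas -/

/-- Time-stamping of predicate symbols : `φ⁽ⁱ⁾`. -/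
def stampF {D Q : Type} {ar : Q → ℕ} (i : ℕ) :
    {V : Type} → Fml D Q ar V → Fml D (ℕ × Q) (fun p => ar p.2) V
  | _, .eq t s => .eq t s
  | _, .pred q ts => .pred (i, q) ts
  | _, .not φ => .not (stampF i φ)
  | _, .and φ ψ => .and (stampF i φ) (stampF i ψ)
  | _, .ex φ => .ex (stampF i φ)

/-- The valuation `w_D` of the time-stamped input variables `x⁽ⁱ⁾ ↦ νᵢ(x)`. -/
def wD {Sig X D : Type} [Nonempty D] (w : DWord Sig X D) : (ℕ × X) → D := fun p =>
  if h : 1 ≤ p.1 ∧ p.1 - 1 < w.length then (w.get ⟨p.1 - 1, h.2⟩).2 p.2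
  else Classical.arbitrary D

namespace FOAA

variable {Sig X D : Type} (A : FOAA Sig X D)

/-- The time-stamped right-hand side `ψ⁽ⁱ⁾` of the transition rule for `(q, a)`. -/
def ruleF (i : ℕ) (q : A.Q) (a : Sig) :
    Fml D (ℕ × A.Q) (fun p => A.ar p.2) ((ℕ × X) ⊕ Fin (A.ar q)) :=
  (stampF i (A.delta q a)).rename (Sum.map (fun x => (i, x)) id)

/-- `⋀_{q(ȳ) →^{a(X)} ψ ∈ Δ} ∀ȳ. q⁽ᵏ⁾(ȳ) → ψ⁽ᵏ⁺¹⁾`. -/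
def stepFml [Nonempty D] (k : ℕ) (a : Sig) :
    Fml D (ℕ × A.Q) (fun p => A.ar p.2) (ℕ × X) :=
  Fml.conj <| A.QList.map fun q =>
    Fml.allN (Fml.imp (.pred (k, q) fun i => .var (Sum.inr i)) (A.ruleF (k + 1) q a))

/-- `⋀_{q ∈ Q∖F} ∀ȳ. q⁽ⁿ⁾(ȳ) → ⊥`. -/
def finalFml [Nonempty D] (n : ℕ) : Fml D (ℕ × A.Q) (fun p => A.ar p.2) (ℕ × X) :=
  Fml.conj <| A.QList.map fun q =>
    if q ∈ A.F then Fml.tt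
    else Fml.allN (Fml.imp (.pred (n, q) fun i => .var (Sum.inr i)) Fml.ff)

/-- The path formula `Θ(α)`. -/
def theta [Nonempty D] (α : List Sig) : Fml D (ℕ × A.Q) (fun p => A.ar p.2) (ℕ × X) :=
  .and ((stampF 0 A.init).rename fun v : Empty => v.elim)
    (Fml.conj <| (List.finRange α.length).map fun j => A.stepFml j.val (α.get j))

/-- The acceptance formula `Υ(α)`. -/
def upsilon [Nonempty D] (α : List Sig) : Fml D (ℕ × A.Q) (fun p => A.ar p.2) (ℕ × X) :=
  .and (A.theta α) (A.finalFml α.length)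

/-- The interpretation `I_T` of the time-stamped predicates associated with an execution
(represented by its set of paths). -/
def execInterp (T : Set (List A.Cfg)) : Interp D (ℕ × A.Q) (fun p => A.ar p.2) :=
  fun p => {d | ∃ pf : List A.Cfg, pf.length = p.1 ∧ pf ++ [⟨p.2, d⟩] ∈ T}

end FOAA

/-! ### Predicate-free acceptance formulas `Φ̂(α)` -/

namespace FOAA

variable {Sig X D : Type} (A : FOAA Sig X D)

/-- `Φ̂ₙ(αᵢ)` for `i = α.length` : obtained from `ι⁽⁰⁾` by repeatedly substituting, for every
predicate atom `q⁽ⁱ⁻¹⁾(t̄)`, the formula `ψ⁽ⁱ⁾[t̄/ȳ]` of the corresponding transition rule.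
Since all predicate atoms of the `i`-th formula carry the stamp `i`, the stamps of
predicates are kept implicit. -/
def phiHatN [Nonempty D] (α : List Sig) : Fml D A.Q A.ar (ℕ × X) :=
  (List.finRange α.length).foldl
    (fun acc j =>
      Fml.substPred
        (fun q => (A.delta q (α.get j)).rename (Sum.map (fun x => (j.val + 1, x)) id))
        id acc)
    (A.init.rename fun v : Empty => v.elim)

/-- `Φ̂(α)` : additionally replace every remaining atom `q⁽ⁿ⁾(t̄)` by `⊥` if `q ∉ F` and by
`⊤` if `q ∈ F`.  The result contains no predicate symbols. -/
def phiHat [Nonempty D] (α : List Sig) :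
    Fml D Empty (fun e => e.elim) (ℕ × X) :=
  Fml.substPred (fun q => if q ∈ A.F then Fml.tt else Fml.ff) id (A.phiHatN α)

end FOAA

/-- The unique interpretation over an empty set of predicate symbols. -/
def emptyInterp (D : Type) : Interp D Empty (fun e => e.elim) := fun q => q.elim

/-! ### Size, intersection and complementation of automata -/

namespace FOAA

variable {Sig X D : Type}

/-- `|A| = |ι| + Σ_{rules} |ψ|`. -/
def size [Fintype Sig] (A : FOAA Sig X D) : ℕ :=
  A.init.size + (A.QList.map fun q => ∑ a : Sig, (A.delta q a).size).sum

/-- The intersection automaton `A∩` (disjointness of the predicate sets is modeled by a sum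
type). -/
def inter (A₁ A₂ : FOAA Sig X D) : FOAA Sig X D where
  Q := A₁.Q ⊕ A₂.Q
  QList := A₁.QList.map Sum.inl ++ A₂.QList.map Sum.inr
  QList_mem := by
    intro q
    cases q with
    | inl q => exact List.mem_append_left _ (List.mem_map_of_mem (A₁.QList_mem q))
    | inr q => exact List.mem_append_right _ (List.mem_map_of_mem (A₂.QList_mem q))
  ar := Sum.elim A₁.ar A₂.ar
  init := .and (Fml.mapPred Sum.inl (fun _ => rfl) A₁.init)
               (Fml.mapPred Sum.inr (fun _ => rfl) A₂.init)
  init_pos := by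
    exact ⟨Fml.polarity_mapPred (Q' := A₁.Q ⊕ A₂.Q) (ar' := Sum.elim A₁.ar A₂.ar)
        Sum.inl (fun _ => rfl) A₁.init true A₁.init_pos,
      Fml.polarity_mapPred (Q' := A₁.Q ⊕ A₂.Q) (ar' := Sum.elim A₁.ar A₂.ar)
        Sum.inr (fun _ => rfl) A₂.init true A₂.init_pos⟩
  F := Sum.inl '' A₁.F ∪ Sum.inr '' A₂.F
  delta := fun q a =>
    match q with
    | Sum.inl q₁ => Fml.mapPred Sum.inl (fun _ => rfl) (A₁.delta q₁ a)
    | Sum.inr q₂ => Fml.mapPred Sum.inr (fun _ => rfl) (A₂.delta q₂ a)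
  delta_pos := by
    intro q a
    cases q with
    | inl q₁ =>
        exact Fml.polarity_mapPred (Q' := A₁.Q ⊕ A₂.Q) (ar' := Sum.elim A₁.ar A₂.ar)
          Sum.inl (fun _ => rfl) (A₁.delta q₁ a) true (A₁.delta_pos q₁ a)
    | inr q₂ =>
        exact Fml.polarity_mapPred (Q' := A₁.Q ⊕ A₂.Q) (ar' := Sum.elim A₁.ar A₂.ar)
          Sum.inr (fun _ => rfl) (A₂.delta q₂ a) true (A₂.delta_pos q₂ a)

/-- The dual automaton `Ā`. -/
def dualA (A : FOAA Sig X D) : FOAA Sig X D where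
  Q := A.Q
  QList := A.QList
  QList_mem := A.QList_mem
  ar := A.ar
  init := A.init.dual
  init_pos := Fml.polarity_dual A.init true A.init_pos
  F := A.Fᶜ
  delta := fun q a => (A.delta q a).dual
  delta_pos := fun q a => Fml.polarity_dual (A.delta q a) true (A.delta_pos q a)

end FOAA

/-! ### Quantifier-free formulas and prenex forms -/

inductive QF (D Q : Type) (ar : Q → ℕ) (V : Type) : Type where
  | eq : Term D V → Term D V → QF D Q ar V
  | pred : (q : Q) → (Fin (ar q) → Term D V) → QF D Q ar V
  | not : QF D Q ar V → QF D Q ar V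
  | and : QF D Q ar V → QF D Q ar V → QF D Q ar V

namespace QF

variable {D Q : Type} {ar : Q → ℕ} {V W : Type}

def Sat (I : Interp D Q ar) : QF D Q ar V → (V → D) → Prop
  | .eq t s, ν => t.eval ν = s.eval ν
  | .pred q ts, ν => (fun i => (ts i).eval ν) ∈ I q
  | .not φ, ν => ¬ Sat I φ ν
  | .and φ ψ, ν => Sat I φ ν ∧ Sat I ψ ν

def rename (f : V → W) : QF D Q ar V → QF D Q ar W
  | .eq t s => .eq (t.rename f) (s.rename f)
  | .pred q ts => .pred q fun i => (ts i).rename f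
  | .not φ => .not (φ.rename f)
  | .and φ ψ => .and (φ.rename f) (ψ.rename f)

def subst (σ : V → Term D W) : QF D Q ar V → QF D Q ar W
  | .eq t s => .eq (t.subst σ) (s.subst σ)
  | .pred q ts => .pred q fun i => (ts i).subst σ
  | .not φ => .not (φ.subst σ)
  | .and φ ψ => .and (φ.subst σ) (ψ.subst σ)

def imp (φ ψ : QF D Q ar V) : QF D Q ar V := .not (.and φ (.not ψ))

def toFml : QF D Q ar V → Fml D Q ar V
  | .eq t s => .eq t s
  | .pred q ts => .pred q ts
  | .not φ => .not φ.toFml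
  | .and φ ψ => .and φ.toFml ψ.toFml

/-- The list of predicate atoms occurring in a quantifier-free formula. -/
def atoms : QF D Q ar V → List (Σ q : Q, Fin (ar q) → Term D V)
  | .eq _ _ => []
  | .pred q ts => [⟨q, ts⟩]
  | .not φ => φ.atoms
  | .and φ ψ => φ.atoms ++ ψ.atoms

def fv : QF D Q ar V → Set V
  | .eq t s => t.vars ∪ s.vars
  | .pred _ ts => ⋃ i, (ts i).vars
  | .not φ => φ.fv
  | .and φ ψ => φ.fv ∪ ψ.fv

def predsPol (b : Bool) : QF D Q ar V → Set Q
  | .eq _ _ => ∅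
  | .pred q _ => if b then {q} else ∅
  | .not φ => φ.predsPol (!b)
  | .and φ ψ => φ.predsPol b ∪ ψ.predsPol b

def Polarity : QF D Q ar V → Bool → Prop
  | .eq _ _, _ => True
  | .pred _ _, b => b = true
  | .not φ, b => φ.Polarity (!b)
  | .and φ ψ, b => φ.Polarity b ∧ ψ.Polarity b

def Positive (φ : QF D Q ar V) : Prop := φ.Polarity true

/-- In-place replacement of the atoms of predicate `q0` by instances of a formula. -/
def replaceAtom [DecidableEq Q] (q0 : Q) (χ : (Fin (ar q0) → Term D V) → Fml D Q ar V) :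
    QF D Q ar V → Fml D Q ar V
  | .eq t s => .eq t s
  | .pred q ts =>
      if h : q = q0 then χ (fun i => ts (Fin.cast (congrArg ar h.symm) i))
      else .pred q ts
  | .not φ => .not (replaceAtom q0 χ φ)
  | .and φ ψ => .and (replaceAtom q0 χ φ) (replaceAtom q0 χ ψ)

end QF

/-- Semantics of a quantifier prefix : the `j`-th entry of `pre` binds the prenex variable
of index `j` (`true` = ∃, `false` = ∀). -/
def quantSem {D : Type} : List Bool → ℕ → ((ℕ → D) → Prop) → (ℕ → D) → Prop
  | [], _, P, g => P g
  | b :: rest, j, P, g =>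
      if b then ∃ d : D, quantSem rest (j + 1) P (Function.update g j d)
      else ∀ d : D, quantSem rest (j + 1) P (Function.update g j d)

/-- A formula in prenex form: a quantifier prefix binding the prenex variables
(the `ℕ` summand of the variables of the matrix). -/
structure PF (D Q : Type) (ar : Q → ℕ) (V : Type) : Type where
  pre : List Bool
  mat : QF D Q ar (V ⊕ ℕ)

namespace PF

variable {D Q : Type} {ar : Q → ℕ} {V : Type}

def Sat [Nonempty D] (I : Interp D Q ar) (φ : PF D Q ar V) (ν : V → D) : Prop :=
  quantSem φ.pre 0 (fun g => φ.mat.Sat I (Sum.elim ν g)) fun _ => Classical.arbitrary D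

end PF

/-- Prenex normal form. -/
def prenex {D Q : Type} {ar : Q → ℕ} : {V : Type} → Fml D Q ar V → PF D Q ar V
  | _, .eq t s => ⟨[], .eq (t.rename Sum.inl) (s.rename Sum.inl)⟩
  | _, .pred q ts => ⟨[], .pred q fun i => (ts i).rename Sum.inl⟩
  | _, .not φ =>
      let p := prenex φ
      ⟨p.pre.map (!·), .not p.mat⟩
  | _, .and φ ψ =>
      let p := prenex φ
      let r := prenex ψ
      ⟨p.pre ++ r.pre, .and p.mat (r.mat.rename (Sum.map id (· + p.pre.length)))⟩
  | _, .ex φ =>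
      let p := prenex φ
      ⟨true :: p.pre,
        p.mat.rename fun v =>
          match v with
          | Sum.inl (some x) => Sum.inl x
          | Sum.inl none => Sum.inr 0
          | Sum.inr j => Sum.inr (j + 1)⟩

/-! ### The path-quantifier-eliminated acceptance formula `Θ̂(α)` -/

namespace FOAA

variable {Sig X D : Type} (A : FOAA Sig X D)

/-- One stage of the construction of `Θ̂ₙ` : conjoin, for every atom `q⁽ʲ⁾(t̄)` occurring in
the matrix so far, the instance `q⁽ʲ⁾(t̄) → ψ⁽ʲ⁺¹⁾[t̄/ȳ]` of the corresponding transition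
rule for the letter `a`, prenexing the transition quantifiers of `ψ` on the fly. -/
def stepPF (j : ℕ) (a : Sig) (Θ : PF D (ℕ × A.Q) (fun p => A.ar p.2) (ℕ × X)) :
    PF D (ℕ × A.Q) (fun p => A.ar p.2) (ℕ × X) :=
  (Θ.mat.atoms.filter fun atm => atm.1.1 == j).foldl
    (fun acc atm =>
      let pψ := prenex (A.ruleF (j + 1) atm.1.2 a)
      let m' : QF D (ℕ × A.Q) (fun p => A.ar p.2) ((ℕ × X) ⊕ ℕ) :=
        pψ.mat.subst fun v =>
          match v with
          | Sum.inl (Sum.inl x) => Term.var (Sum.inl x)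
          | Sum.inl (Sum.inr i) => atm.2 i
          | Sum.inr jj => Term.var (Sum.inr (jj + acc.pre.length))
      ⟨acc.pre ++ pψ.pre, .and acc.mat (QF.imp (.pred atm.1 atm.2) m')⟩)
    Θ

/-- `Θ̂ₙ(αᵢ)` for a prefix length `i ≤ |α|`. -/
def thetaHatStage (α : List Sig) (i : ℕ) : PF D (ℕ × A.Q) (fun p => A.ar p.2) (ℕ × X) :=
  ((List.finRange α.length).take i).foldl
    (fun acc j => A.stepPF j.val (α.get j) acc)
    (prenex ((stampF 0 A.init).rename fun v : Empty => v.elim))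

/-- `Θ̂ₙ(αₙ)`. -/
def thetaHatN (α : List Sig) : PF D (ℕ × A.Q) (fun p => A.ar p.2) (ℕ × X) :=
  A.thetaHatStage α α.length

/-- `Θ̂(α)`, in prenex form : `Θ̂ₙ(αₙ)` conjoined with the instances
`q⁽ⁿ⁾(t̄) → ⊥` for the occurring atoms with `q ∈ Q∖F`. -/
def thetaHat [Nonempty D] (α : List Sig) : PF D (ℕ × A.Q) (fun p => A.ar p.2) (ℕ × X) :=
  let Θ := A.thetaHatN α
  ⟨Θ.pre,
    (Θ.mat.atoms.filter fun atm => atm.1.1 == α.length).foldl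
      (fun m atm =>
        if atm.1.2 ∈ A.F then m
        else .and m (QF.imp (.pred atm.1 atm.2)
          (.not (.eq (Term.const (Classical.arbitrary D)) (Term.const (Classical.arbitrary D))))))
      Θ.mat⟩

/-- The length of the quantifier prefix of `Θ̂ₙ(αᵢ)`. -/
def stagePreLen (α : List Sig) (i : ℕ) : ℕ := (A.thetaHatStage α i).pre.length

/-- `ξ` : the monotonic function mapping each transition quantifier of `Θ̂(α)` to the
minimal stage of the sequence `Θ̂ₙ(α₀), …, Θ̂ₙ(αₙ)` where it occurs. -/
def xi (α : List Sig) (j : ℕ) : ℕ := sInf {i : ℕ | j < A.stagePreLen α i}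

/-- `ξ⁻¹max(k)` : the maximal quantifier index mapped by `ξ` to the stage `k`. -/
def xiInvMax (α : List Sig) (k : ℕ) : ℕ :=
  sSup {j : ℕ | j < (A.thetaHatN α).pre.length ∧ A.xi α j = k}

end FOAA

/-! ### Generalized Lyndon interpolants -/

namespace FOAA

variable {Sig X D : Type} (A : FOAA Sig X D)

/-- A generalized Lyndon interpolant (GLI) for the input event sequence `α`;
the formulas `Is k` live over an ambient variable type `W` into which the time-stamped
input variables are embedded by `ρ`. -/
structure IsGLI [Nonempty D] (α : List Sig) {W : Type} (ρ : (ℕ × X) → W)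
    (Is : ℕ → Fml D (ℕ × A.Q) (fun p => A.ar p.2) W) : Prop where
  neg_free : ∀ k ≤ α.length, (Is k).predsPol false = ∅
  init_entail : ∀ (I : Interp D (ℕ × A.Q) (fun p => A.ar p.2)) (ν : W → D),
    (((stampF 0 A.init).rename (fun v : Empty => v.elim) : Fml D (ℕ × A.Q) _ W)).Sat I ν →
    (Is 0).Sat I ν
  step_entail : ∀ (k : Fin α.length) (I : Interp D (ℕ × A.Q) (fun p => A.ar p.2)) (ν : W → D),
    (Is k.val).Sat I ν → ((A.stepFml k.val (α.get k)).rename ρ).Sat I ν →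
    (Is (k.val + 1)).Sat I ν
  final_unsat : ¬ ∃ (I : Interp D (ℕ × A.Q) (fun p => A.ar p.2)) (ν : W → D),
    (Is α.length).Sat I ν ∧ ((A.finalFml α.length).rename ρ).Sat I ν

/-! ### Unfoldings -/

/-- `⋀_{q ∈ Q∖F} ∀ȳ. q(ȳ) → ⊥` over the plain (un-stamped) signature. -/
def finalConstraint [Nonempty D] : Fml D A.Q A.ar Empty :=
  Fml.conj <| A.QList.map fun q =>
    if q ∈ A.F then Fml.tt
    else Fml.allN (Fml.imp (.pred q fun i => .var (Sum.inr i)) Fml.ff)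

/-- An unfolding of `A` : a finite, prefix-closed and complete set `dom ⊆ Σ*` labeled with
positive sentences, compatible with the transition relation. -/
structure IsUnfolding [Nonempty D] (dom : Set (List Sig))
    (lab : List Sig → Fml D A.Q A.ar Empty) : Prop where
  finite : dom.Finite
  prefix_closed : ∀ α ∈ dom, ∀ β : List Sig, β <+: α → β ∈ dom
  complete : ∀ α ∈ dom, ∃ a : Sig, ((α ++ [a]) ∈ dom ↔ ∀ b : Sig, α ++ [b] ∈ dom)
  pos : ∀ α ∈ dom, (lab α).Positive
  init_lab : ∀ (I : Interp D A.Q A.ar) (ν : Empty → D), (lab []).Sat I ν ↔ A.init.Sat I ν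
  step : ∀ α ∈ dom, ∀ a : Sig, (α ++ [a]) ∈ dom →
    ∀ (I : Interp D (ℕ × A.Q) (fun p => A.ar p.2)) (ν : (ℕ × X) → D),
      (((stampF 0 (lab α)).rename (fun v : Empty => v.elim) :
          Fml D (ℕ × A.Q) _ (ℕ × X))).Sat I ν →
      (A.stepFml 0 a).Sat I ν →
      (((stampF 1 (lab (α ++ [a]))).rename (fun v : Empty => v.elim) :
          Fml D (ℕ × A.Q) _ (ℕ × X))).Sat I ν

/-- A safe unfolding. -/
def UnfSafe [Nonempty D] (dom : Set (List Sig))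
    (lab : List Sig → Fml D A.Q A.ar Empty) : Prop :=
  ∀ α ∈ dom, ¬ ∃ (I : Interp D A.Q A.ar) (ν : Empty → D),
    (lab α).Sat I ν ∧ (A.finalConstraint).Sat I ν

/-- `α` is covered by `β`. -/
def Covers (dom : Set (List Sig)) (lab : List Sig → Fml D A.Q A.ar Empty)
    (α β : List Sig) : Prop :=
  β ∈ dom ∧ ∃ α' : List Sig, α' <+: α ∧ α' ∈ dom ∧
    ∀ (I : Interp D A.Q A.ar) (ν : Empty → D), (lab α').Sat I ν → (lab β).Sat I ν

def CoveredNode (dom : Set (List Sig)) (lab : List Sig → Fml D A.Q A.ar Empty)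
    (α : List Sig) : Prop :=
  ∃ β, A.Covers dom lab α β

/-- A closed unfolding : every leaf is covered by an uncovered node. -/
def UnfClosed (dom : Set (List Sig)) (lab : List Sig → Fml D A.Q A.ar Empty) : Prop :=
  ∀ α ∈ dom, (∀ a : Sig, (α ++ [a]) ∉ dom) →
    ∃ β, A.Covers dom lab α β ∧ ¬ A.CoveredNode dom lab β

end FOAA

/-- Existentially quantify the (finitely many) variables listed in `L`, yielding a
sentence. -/
def exClose {D Q : Type} {ar : Q → ℕ} [Nonempty D] {V : Type} [DecidableEq V]
    (L : List V) (φ : Fml D Q ar V) : Fml D Q ar Empty :=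
  Fml.exN (k := L.length)
    (φ.substVar fun v =>
      if hv : v ∈ L then Term.var (Sum.inr ⟨L.idxOf v, List.idxOf_lt_length_iff.mpr hv⟩)
      else Term.const (Classical.arbitrary D))

/-! ### Timed automata -/

/-- Clock constraints over `k` clocks. -/
inductive CC (k : ℕ) : Type where
  | le : Fin k → ℚ → CC k
  | ge : Fin k → ℚ → CC k
  | not : CC k → CC k
  | and : CC k → CC k → CC k

namespace CC

def sat {k : ℕ} (γ : Fin k → ℝ) : CC k → Prop
  | .le i c => γ i ≤ (c : ℝ)
  | .ge i c => (c : ℝ) ≤ γ i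
  | .not δ => ¬ sat γ δ
  | .and δ₁ δ₂ => sat γ δ₁ ∧ sat γ δ₂

/-- Translate a clock constraint into a first-order formula over ℝ, applied to the given
argument terms (the order relations are expressed via interpreted functions and equality
atoms). -/
def toFml {k : ℕ} {Q : Type} {ar : Q → ℕ} {V : Type} :
    CC k → (Fin k → Term ℝ V) → Fml ℝ Q ar V
  | .le i c, args =>
      .eq (Term.app (n := 1) (fun v => if v 0 ≤ (c : ℝ) then 1 else 0) ![args i])
        (Term.const 1)
  | .ge i c, args =>
      .eq (Term.app (n := 1) (fun v => if (c : ℝ) ≤ v 0 then 1 else 0) ![args i])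
        (Term.const 1)
  | .not δ, args => .not (δ.toFml args)
  | .and δ₁ δ₂, args => .and (δ₁.toFml args) (δ₂.toFml args)

/-- `CC.toFml` contains no predicate symbols, hence has any polarity. -/
theorem polarity_toFml {k : ℕ} {Q : Type} {ar : Q → ℕ} {V : Type} :
    ∀ (δ : CC k) (args : Fin k → Term ℝ V) (b : Bool),
      (δ.toFml (Q := Q) (ar := ar) args).Polarity b
  | .le _ _, _, _ => trivial
  | .ge _ _, _, _ => trivial
  | .not δ, args, b => polarity_toFml δ args (!b)
  | .and δ₁ δ₂, args, b => ⟨polarity_toFml δ₁ args b, polarity_toFml δ₂ args b⟩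

end CC

/-- A timed automaton with `k` clocks. -/
structure TimedAuto (Sig : Type) (k : ℕ) : Type 1 where
  S : Type
  SList : List S
  SList_mem : ∀ s : S, s ∈ SList
  S0 : Set S
  F : Set S
  E : List (S × Sig × S × Set (Fin k) × CC k)

/-- `τᵢ` : the time stamp before the `i`-th step (`τ₀ = 0`). -/
def timeAt {Sig : Type} (w : List (Sig × ℝ)) : ℕ → ℝ
  | 0 => 0
  | i + 1 => (w.map Prod.snd).getD i 0

/-- `0 ≤ τ₁ < τ₂ < …`. -/
def IsTimedWord {Sig : Type} (w : List (Sig × ℝ)) : Prop :=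
  (∀ h : 0 < w.length, 0 ≤ (w.get ⟨0, h⟩).2) ∧
    List.Chain' (· < ·) (w.map Prod.snd)

namespace TimedAuto

variable {Sig : Type} {k : ℕ} (T : TimedAuto Sig k)

/-- `T` has an accepting run over the timed word `w`. -/
def Accepts (w : List (Sig × ℝ)) : Prop :=
  ∃ r : ℕ → T.S × (Fin k → ℝ),
    (r 0).1 ∈ T.S0 ∧ ((r 0).2 = fun _ => 0) ∧
    (∀ i : Fin w.length,
      ∃ e ∈ T.E,
        e.1 = (r i.val).1 ∧ e.2.1 = (w.get i).1 ∧ e.2.2.1 = (r (i.val + 1)).1 ∧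
        CC.sat (fun c => (r i.val).2 c + (timeAt w (i.val + 1) - timeAt w i.val))
          e.2.2.2.2 ∧
        ∀ c : Fin k, (r (i.val + 1)).2 c =
          if c ∈ e.2.2.2.1 then 0
          else (r i.val).2 c + (timeAt w (i.val + 1) - timeAt w i.val)) ∧
    (r w.length).1 ∈ T.F

def Lang : Set (List (Sig × ℝ)) := {w | IsTimedWord w ∧ T.Accepts w}

/-- The first-order alternating automaton `A_T` associated with a timed automaton `T` :
predicates of arity `k+1` (the `k` values `yᵢ` tracking `t − xᵢ` plus the time stamp `z`
of the previous event), one input variable `t`. -/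
def toFOAA : FOAA Sig Unit ℝ where
  Q := T.S
  QList := T.SList
  QList_mem := T.SList_mem
  ar := fun _ => k + 1
  init := Fml.disj <|
    (T.SList.filter fun s => decide (s ∈ T.S0)).map fun s =>
      .pred s fun _ => Term.const 0
  init_pos := by
    apply Fml.polarity_disj
    intro φ hφ
    simp only [List.mem_map] at hφ
    obtain ⟨s, -, rfl⟩ := hφ
    exact rfl
  F := T.F
  delta := fun s a =>
    Fml.disj <|
      (T.E.filter fun e => decide (e.1 = s ∧ e.2.1 = a)).map fun e =>
        .and
          (.eq (Term.app (n := 2) (fun v => if v 0 < v 1 then 1 else 0)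
              ![Term.var (Sum.inr (Fin.last k)), Term.var (Sum.inl ())])
            (Term.const 1))
          (.and
            (e.2.2.2.2.toFml fun i =>
              Term.app (n := 2) (fun v => v 0 - v 1)
                ![Term.var (Sum.inr (Fin.last k)), Term.var (Sum.inr i.castSucc)])
            (.pred e.2.2.1 fun i =>
              Fin.lastCases (Term.var (Sum.inl ()))
                (fun c =>
                  if c ∈ e.2.2.2.1 then Term.var (Sum.inr (Fin.last k))
                  else Term.var (Sum.inr c.castSucc))
                i))
  delta_pos := by
    intro s a
    apply Fml.polarity_disj
    intro φ hφ
    simp only [List.mem_map] at hφ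
    obtain ⟨e, -, rfl⟩ := hφ
    exact ⟨trivial, CC.polarity_toFml _ _ true, rfl⟩

end TimedAuto

/-- The encoding `d(w)` of a timed word as a data word. -/
def encodeTimed {Sig : Type} (w : List (Sig × ℝ)) : DWord Sig Unit ℝ :=
  w.map fun p => (p.1, fun _ => p.2)

/-! ### Register automata -/

/-- A finite-memory (register) automaton with `r` registers over the infinite alphabet `A`;
`none` plays the role of the symbol `#`. -/
structure RegAuto (A : Type) (r : ℕ) : Type 1 where
  S : Type
  SList : List S
  SList_mem : ∀ s : S, s ∈ SList
  s0 : S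
  u0 : Fin r → Option A
  u0_distinct : ∀ i j : Fin r, i ≠ j → u0 i = u0 j → u0 i = none
  rho : S → Option (Fin r)
  mu : List (S × Fin r × S)
  F : Set S

namespace RegAuto

variable {A : Type} {r : ℕ} (R : RegAuto A r)

def Accepts (word : List A) : Prop :=
  ∃ v : ℕ → R.S × (Fin r → Option A),
    v 0 = (R.s0, R.u0) ∧
    (∀ i : Fin word.length,
      ((∃ kk : Fin r, (v i.val).2 kk = some (word.get i) ∧
          (v (i.val + 1)).2 = (v i.val).2 ∧
          ((v i.val).1, kk, (v (i.val + 1)).1) ∈ R.mu) ∨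
        ((∀ kk : Fin r, (v i.val).2 kk ≠ some (word.get i)) ∧
          ∃ kk : Fin r, R.rho (v i.val).1 = some kk ∧
            (v (i.val + 1)).2 kk = some (word.get i) ∧
            (∀ kk' : Fin r, kk' ≠ kk → (v (i.val + 1)).2 kk' = (v i.val).2 kk') ∧
            ((v i.val).1, kk, (v (i.val + 1)).1) ∈ R.mu))) ∧
    (v word.length).1 ∈ R.F

def Lang : Set (List A) := {u | R.Accepts u}

/-- The first-order alternating automaton `A_R` associated with a register automaton `R` :
a single input event, one input variable `x`, predicates of arity `r`, over the data
domain `Option A` (where `none` encodes `#`). -/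
def toFOAA : FOAA Unit Unit (Option A) where
  Q := R.S
  QList := R.SList
  QList_mem := R.SList_mem
  ar := fun _ => r
  init := .pred R.s0 fun i => Term.const (R.u0 i)
  init_pos := rfl
  F := R.F
  delta := fun s _ =>
    Fml.disj <|
      (R.mu.filter fun m => decide (m.1 = s)).map fun m =>
        Fml.or
          (.and (.eq (Term.var (Sum.inr m.2.1)) (Term.var (Sum.inl ())))
            (.pred m.2.2 fun i => Term.var (Sum.inr i)))
          (.and
            (Fml.conj <| (List.finRange r).map fun i =>
              .not (.eq (Term.var (Sum.inl ())) (Term.var (Sum.inr i))))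
            (.pred m.2.2 fun i =>
              if i = m.2.1 then Term.var (Sum.inl ()) else Term.var (Sum.inr i)))
  delta_pos := by
    intro s a
    apply Fml.polarity_disj
    intro φ hφ
    simp only [List.mem_map] at hφ
    obtain ⟨m, -, rfl⟩ := hφ
    refine Fml.polarity_or ⟨trivial, rfl⟩ ⟨?_, rfl⟩
    apply Fml.polarity_conj
    intro ψ hψ
    simp only [List.mem_map] at hψ
    obtain ⟨i, -, rfl⟩ := hψ
    exact trivial

end RegAuto

/-- The encoding of a word over the alphabet `A` as a data word. -/
def encodeReg {A : Type} (u : List A) : DWord Unit Unit (Option A) :=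
  u.map fun a => ((), fun _ => some a)

end FOADA

/-! ### Auxiliary development for Statement 5 -/

namespace FOADA

section Aux1

variable {D : Type}

namespace Term

theorem eval_rename {V W : Type} (f : V → W) (ν : W → D) :
    ∀ t : Term D V, (t.rename f).eval ν = t.eval fun v => ν (f v)
  | .var v => rfl
  | .app g ts => by
      simp only [rename, eval]
      exact congrArg g (funext fun i => eval_rename f ν (ts i))

theorem eval_subst {V W : Type} (θ : V → Term D W) (ν : W → D) :
    ∀ t : Term D V, (t.subst θ).eval ν = t.eval fun v => (θ v).eval ν
  | .var v => rfl
  | .app g ts => by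
      simp only [subst, eval]
      exact congrArg g (funext fun i => eval_subst θ ν (ts i))

theorem eval_congr {V : Type} {ν μ : V → D} :
    ∀ t : Term D V, (∀ v ∈ t.vars, ν v = μ v) → t.eval ν = t.eval μ
  | .var v, h => h v rfl
  | .app g ts, h => by
      simp only [eval]
      exact congrArg g (funext fun i =>
        eval_congr (ts i) fun v hv => h v (Set.mem_iUnion.2 ⟨i, hv⟩))

theorem vars_rename {V W : Type} (f : V → W) :
    ∀ t : Term D V, ∀ w ∈ (t.rename f).vars, ∃ v ∈ t.vars, w = f v
  | .var v, w, hw => ⟨v, rfl, hw⟩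
  | .app g ts, w, hw => by
      simp only [rename, vars, Set.mem_iUnion] at hw
      obtain ⟨i, hi⟩ := hw
      obtain ⟨v, hv, rfl⟩ := vars_rename f (ts i) w hi
      exact ⟨v, Set.mem_iUnion.2 ⟨i, hv⟩, rfl⟩

theorem vars_subst {V W : Type} (θ : V → Term D W) :
    ∀ t : Term D V, ∀ w ∈ (t.subst θ).vars, ∃ v ∈ t.vars, w ∈ (θ v).vars
  | .var v, w, hw => ⟨v, rfl, hw⟩
  | .app g ts, w, hw => by
      simp only [subst, vars, Set.mem_iUnion] at hw
      obtain ⟨i, hi⟩ := hw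
      obtain ⟨v, hv, hv'⟩ := vars_subst θ (ts i) w hi
      exact ⟨v, Set.mem_iUnion.2 ⟨i, hv⟩, hv'⟩

theorem eval_const {V : Type} (d : D) (ν : V → D) : (Term.const d).eval ν = d := rfl

end Term

namespace QF

variable {Q : Type} {ar : Q → ℕ}

theorem sat_rename (I : Interp D Q ar) {V W : Type} (f : V → W) :
    ∀ (φ : QF D Q ar V) (ν : W → D), (φ.rename f).Sat I ν ↔ φ.Sat I fun v => ν (f v)
  | .eq t s, ν => by simp [rename, Sat, Term.eval_rename]
  | .pred q ts, ν => by simp [rename, Sat, Term.eval_rename]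
  | .not φ, ν => by simp [rename, Sat, sat_rename I f φ ν]
  | .and φ ψ, ν => by simp [rename, Sat, sat_rename I f φ ν, sat_rename I f ψ ν]

theorem sat_subst (I : Interp D Q ar) {V W : Type} (θ : V → Term D W) :
    ∀ (φ : QF D Q ar V) (ν : W → D), (φ.subst θ).Sat I ν ↔ φ.Sat I fun v => (θ v).eval ν
  | .eq t s, ν => by simp [subst, Sat, Term.eval_subst]
  | .pred q ts, ν => by simp [subst, Sat, Term.eval_subst]
  | .not φ, ν => by simp [subst, Sat, sat_subst I θ φ ν]
  | .and φ ψ, ν => by simp [subst, Sat, sat_subst I θ φ ν, sat_subst I θ ψ ν]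

theorem sat_congr (I : Interp D Q ar) {V : Type} :
    ∀ (φ : QF D Q ar V) {ν μ : V → D}, (∀ v ∈ φ.fv, ν v = μ v) → (φ.Sat I ν ↔ φ.Sat I μ)
  | .eq t s, ν, μ, h => by
      simp only [Sat]
      rw [Term.eval_congr t fun v hv => h v (Or.inl hv),
        Term.eval_congr s fun v hv => h v (Or.inr hv)]
  | .pred q ts, ν, μ, h => by
      simp only [Sat]
      have : (fun i => (ts i).eval ν) = fun i => (ts i).eval μ :=
        funext fun i => Term.eval_congr (ts i) fun v hv => h v (Set.mem_iUnion.2 ⟨i, hv⟩)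
      rw [this]
  | .not φ, ν, μ, h => by simp only [Sat]; rw [sat_congr I φ h]
  | .and φ ψ, ν, μ, h => by
      simp only [Sat]
      rw [sat_congr I φ fun v hv => h v (Or.inl hv),
        sat_congr I ψ fun v hv => h v (Or.inr hv)]

theorem atoms_rename {V W : Type} (f : V → W) :
    ∀ φ : QF D Q ar V,
      (φ.rename f).atoms = φ.atoms.map fun a => ⟨a.1, fun i => (a.2 i).rename f⟩
  | .eq _ _ => rfl
  | .pred q ts => rfl
  | .not φ => atoms_rename f φ
  | .and φ ψ => by
      simp only [rename, atoms, atoms_rename f φ, atoms_rename f ψ, List.map_append]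

theorem atoms_subst {V W : Type} (θ : V → Term D W) :
    ∀ φ : QF D Q ar V,
      (φ.subst θ).atoms = φ.atoms.map fun a => ⟨a.1, fun i => (a.2 i).subst θ⟩
  | .eq _ _ => rfl
  | .pred q ts => rfl
  | .not φ => atoms_subst θ φ
  | .and φ ψ => by
      simp only [subst, atoms, atoms_subst θ φ, atoms_subst θ ψ, List.map_append]

theorem fv_rename {V W : Type} (f : V → W) :
    ∀ φ : QF D Q ar V, ∀ w ∈ (φ.rename f).fv, ∃ v ∈ φ.fv, w = f v
  | .eq t s, w, hw => by
      rcases hw with hw | hw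
      · obtain ⟨v, hv, rfl⟩ := Term.vars_rename f t w hw
        exact ⟨v, Or.inl hv, rfl⟩
      · obtain ⟨v, hv, rfl⟩ := Term.vars_rename f s w hw
        exact ⟨v, Or.inr hv, rfl⟩
  | .pred q ts, w, hw => by
      simp only [rename, fv, Set.mem_iUnion] at hw
      obtain ⟨i, hi⟩ := hw
      obtain ⟨v, hv, rfl⟩ := Term.vars_rename f (ts i) w hi
      exact ⟨v, Set.mem_iUnion.2 ⟨i, hv⟩, rfl⟩
  | .not φ, w, hw => fv_rename f φ w hw
  | .and φ ψ, w, hw => by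
      rcases hw with hw | hw
      · obtain ⟨v, hv, rfl⟩ := fv_rename f φ w hw
        exact ⟨v, Or.inl hv, rfl⟩
      · obtain ⟨v, hv, rfl⟩ := fv_rename f ψ w hw
        exact ⟨v, Or.inr hv, rfl⟩

theorem fv_subst {V W : Type} (θ : V → Term D W) :
    ∀ φ : QF D Q ar V, ∀ w ∈ (φ.subst θ).fv, ∃ v ∈ φ.fv, w ∈ (θ v).vars
  | .eq t s, w, hw => by
      rcases hw with hw | hw
      · obtain ⟨v, hv, hv'⟩ := Term.vars_subst θ t w hw
        exact ⟨v, Or.inl hv, hv'⟩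
      · obtain ⟨v, hv, hv'⟩ := Term.vars_subst θ s w hw
        exact ⟨v, Or.inr hv, hv'⟩
  | .pred q ts, w, hw => by
      simp only [subst, fv, Set.mem_iUnion] at hw
      obtain ⟨i, hi⟩ := hw
      obtain ⟨v, hv, hv'⟩ := Term.vars_subst θ (ts i) w hi
      exact ⟨v, Set.mem_iUnion.2 ⟨i, hv⟩, hv'⟩
  | .not φ, w, hw => fv_subst θ φ w hw
  | .and φ ψ, w, hw => by
      rcases hw with hw | hw
      · obtain ⟨v, hv, hv'⟩ := fv_subst θ φ w hw
        exact ⟨v, Or.inl hv, hv'⟩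
      · obtain ⟨v, hv, hv'⟩ := fv_subst θ ψ w hw
        exact ⟨v, Or.inr hv, hv'⟩

theorem atom_vars_sub_fv {V : Type} :
    ∀ φ : QF D Q ar V, ∀ atm ∈ φ.atoms, ∀ (i : Fin (ar atm.1)), (atm.2 i).vars ⊆ φ.fv
  | .eq _ _, atm, h, i => by simp [atoms] at h
  | .pred q ts, atm, h, i => by
      simp only [atoms, List.mem_singleton] at h
      subst h
      intro v hv
      exact Set.mem_iUnion.2 ⟨i, hv⟩
  | .not φ, atm, h, i => atom_vars_sub_fv φ atm h i
  | .and φ ψ, atm, h, i => by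
      simp only [atoms, List.mem_append] at h
      rcases h with h | h
      · exact fun v hv => Or.inl (atom_vars_sub_fv φ atm h i hv)
      · exact fun v hv => Or.inr (atom_vars_sub_fv ψ atm h i hv)

theorem polarity_rename {V W : Type} (f : V → W) :
    ∀ (φ : QF D Q ar V) (b : Bool), φ.Polarity b → (φ.rename f).Polarity b
  | .eq _ _, _, h => h
  | .pred _ _, _, h => h
  | .not φ, b, h => polarity_rename f φ (!b) h
  | .and φ ψ, b, h => ⟨polarity_rename f φ b h.1, polarity_rename f ψ b h.2⟩

theorem polarity_subst {V W : Type} (θ : V → Term D W) :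
    ∀ (φ : QF D Q ar V) (b : Bool), φ.Polarity b → (φ.subst θ).Polarity b
  | .eq _ _, _, h => h
  | .pred _ _, _, h => h
  | .not φ, b, h => polarity_subst θ φ (!b) h
  | .and φ ψ, b, h => ⟨polarity_subst θ φ b h.1, polarity_subst θ ψ b h.2⟩

/-- Monotonicity with respect to the interpretation, on the occurring atoms, for
formulas of a given polarity. -/
theorem sat_mono {I J : Interp D Q ar} {V : Type} :
    ∀ (φ : QF D Q ar V) (ν : V → D),
      (∀ atm ∈ φ.atoms, (fun i => (atm.2 i).eval ν) ∈ I atm.1 →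
        (fun i => (atm.2 i).eval ν) ∈ J atm.1) →
      ∀ b : Bool, φ.Polarity b →
        (b = true → φ.Sat I ν → φ.Sat J ν) ∧ (b = false → φ.Sat J ν → φ.Sat I ν)
  | .eq t s, ν, hat, b, hp => ⟨fun _ h => h, fun _ h => h⟩
  | .pred q ts, ν, hat, b, hp => by
      constructor
      · intro _ h
        exact hat ⟨q, ts⟩ (List.mem_singleton_self _) h
      · intro hb
        rw [hp] at hb
        exact absurd hb (by simp)
  | .not φ, ν, hat, b, hp => by
      have ih := sat_mono φ ν hat (!b) hp
      constructor
      · intro hb h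
        rw [hb] at ih
        exact fun hJ => h (ih.2 rfl hJ)
      · intro hb h
        rw [hb] at ih
        exact fun hI => h (ih.1 rfl hI)
  | .and φ ψ, ν, hat, b, hp => by
      have ihφ := sat_mono φ ν (fun atm h => hat atm (List.mem_append_left _ h)) b hp.1
      have ihψ := sat_mono ψ ν (fun atm h => hat atm (List.mem_append_right _ h)) b hp.2
      exact ⟨fun hb h => ⟨ihφ.1 hb h.1, ihψ.1 hb h.2⟩,
        fun hb h => ⟨ihφ.2 hb h.1, ihψ.2 hb h.2⟩⟩

end QF

namespace Fml

variable {Q : Type} {ar : Q → ℕ}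

theorem sat_rename (I : Interp D Q ar) :
    ∀ {V W : Type} (f : V → W) (φ : Fml D Q ar V) (ν : W → D),
      (φ.rename f).Sat I ν ↔ φ.Sat I fun v => ν (f v)
  | _, _, f, .eq t s, ν => by simp [rename, Sat, Term.eval_rename]
  | _, _, f, .pred q ts, ν => by simp [rename, Sat, Term.eval_rename]
  | _, _, f, .not φ, ν => by simp [rename, Sat, sat_rename I f φ ν]
  | _, _, f, .and φ ψ, ν => by simp [rename, Sat, sat_rename I f φ ν, sat_rename I f ψ ν]
  | _, _, f, .ex φ, ν => by
      simp only [rename, Sat]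
      refine exists_congr fun d => ?_
      rw [sat_rename I (Option.map f) φ]
      apply iff_of_eq
      congr 1
      funext o
      cases o <;> rfl

theorem sat_substVar (I : Interp D Q ar) :
    ∀ {V W : Type} (θ : V → Term D W) (φ : Fml D Q ar V) (ν : W → D),
      (φ.substVar θ).Sat I ν ↔ φ.Sat I fun v => (θ v).eval ν
  | _, _, θ, .eq t s, ν => by simp [substVar, Sat, Term.eval_subst]
  | _, _, θ, .pred q ts, ν => by simp [substVar, Sat, Term.eval_subst]
  | _, _, θ, .not φ, ν => by simp [substVar, Sat, sat_substVar I θ φ ν]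
  | _, _, θ, .and φ ψ, ν => by
      simp [substVar, Sat, sat_substVar I θ φ ν, sat_substVar I θ ψ ν]
  | _, _, θ, .ex φ, ν => by
      simp only [substVar, Sat]
      refine exists_congr fun d => ?_
      rw [sat_substVar I _ φ]
      apply iff_of_eq
      congr 1
      funext o
      cases o with
      | none => rfl
      | some v => simp [Term.eval_rename]

theorem sat_stampF (i : ℕ) (I : Interp D (ℕ × Q) fun p => ar p.2) :
    ∀ {V : Type} (φ : Fml D Q ar V) (ν : V → D),
      (stampF i φ).Sat I ν ↔ φ.Sat (fun q => I (i, q)) ν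
  | _, .eq t s, ν => Iff.rfl
  | _, .pred q ts, ν => Iff.rfl
  | _, .not φ, ν => by simp [stampF, Sat, sat_stampF i I φ ν]
  | _, .and φ ψ, ν => by simp [stampF, Sat, sat_stampF i I φ ν, sat_stampF i I ψ ν]
  | _, .ex φ, ν => by
      simp only [stampF, Sat]
      exact exists_congr fun d => sat_stampF i I φ _

theorem sat_substPred {Q' : Type} {ar' : Q' → ℕ} {V0 : Type}
    (σ : ∀ q : Q, Fml D Q' ar' (V0 ⊕ Fin (ar q))) (J : Interp D Q' ar') :
    ∀ {V : Type} (ρ : V0 → V) (φ : Fml D Q ar V) (ν : V → D),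
      (φ.substPred σ ρ).Sat J ν ↔
        φ.Sat (fun q => {d | (σ q).Sat J (Sum.elim (fun v0 => ν (ρ v0)) d)}) ν
  | _, ρ, .eq t s, ν => Iff.rfl
  | _, ρ, .pred q ts, ν => by
      simp only [substPred, Sat]
      rw [sat_substVar]
      apply iff_of_eq
      show _ = ((fun i => (ts i).eval ν) ∈ {d | _})
      simp only [Set.mem_setOf_eq]
      congr 1
      funext v
      cases v <;> rfl
  | _, ρ, .not φ, ν => by simp [substPred, Sat, sat_substPred σ J ρ φ ν]
  | _, ρ, .and φ ψ, ν => by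
      simp [substPred, Sat, sat_substPred σ J ρ φ ν, sat_substPred σ J ρ ψ ν]
  | _, ρ, .ex φ, ν => by
      simp only [substPred, Sat]
      exact exists_congr fun d => sat_substPred σ J _ φ _

theorem sat_tt [Nonempty D] {V : Type} (I : Interp D Q ar) (ν : V → D) :
    (Fml.tt : Fml D Q ar V).Sat I ν := rfl

theorem sat_ff [Nonempty D] {V : Type} (I : Interp D Q ar) (ν : V → D) :
    ¬ (Fml.ff : Fml D Q ar V).Sat I ν := fun h => h rfl

end Fml

end Aux1

end FOADA

namespace FOADA

section Aux2

variable {D : Type}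

theorem quantSem_mono : ∀ (pre : List Bool) (k : ℕ) {P Q : (ℕ → D) → Prop} {g : ℕ → D},
    quantSem pre k P g → (∀ h, (∀ i < k, h i = g i) → P h → Q h) → quantSem pre k Q g := by
  intro pre
  induction pre with
  | nil => intro k P Q g hq himp; exact himp g (fun _ _ => rfl) hq
  | cons b rest ih =>
    intro k P Q g hq himp
    simp only [quantSem] at hq ⊢
    have key : ∀ d : D, quantSem rest (k + 1) P (Function.update g k d) →
        quantSem rest (k + 1) Q (Function.update g k d) := by
      intro d hd
      refine ih (k + 1) hd fun h hagree hp => himp h (fun i hi => ?_) hp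
      have h1 := hagree i (by omega)
      rwa [Function.update_of_ne (by omega)] at h1
    cases b with
    | false =>
      rw [if_neg (by simp)] at hq ⊢
      exact fun d => key d (hq d)
    | true =>
      rw [if_pos rfl] at hq ⊢
      obtain ⟨d, hd⟩ := hq
      exact ⟨d, key d hd⟩

theorem quantSem_of_forall [Nonempty D] :
    ∀ (pre : List Bool) (k : ℕ) {P : (ℕ → D) → Prop} {g : ℕ → D},
    (∀ h, (∀ i < k, h i = g i) → P h) → quantSem pre k P g := by
  intro pre
  induction pre with
  | nil => intro k P g h; exact h g fun _ _ => rfl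
  | cons b rest ih =>
    intro k P g h
    simp only [quantSem]
    have key : ∀ d : D, quantSem rest (k + 1) P (Function.update g k d) := by
      intro d
      refine ih (k + 1) fun h' hagree => h h' fun i hi => ?_
      have h1 := hagree i (by omega)
      rwa [Function.update_of_ne (by omega)] at h1
    cases b with
    | false => rw [if_neg (by simp)]; exact key
    | true => rw [if_pos rfl]; exact ⟨Classical.arbitrary D, key _⟩

theorem quantSem_exists_play :
    ∀ (pre : List Bool) (k : ℕ) {P : (ℕ → D) → Prop} {g : ℕ → D},
    quantSem pre k P g → ∃ h, (∀ i < k, h i = g i) ∧ P h := by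
  intro pre
  induction pre with
  | nil => intro k P g hq; exact ⟨g, fun _ _ => rfl, hq⟩
  | cons b rest ih =>
    intro k P g hq
    simp only [quantSem] at hq
    have key : ∀ d : D, quantSem rest (k + 1) P (Function.update g k d) →
        ∃ h, (∀ i < k, h i = g i) ∧ P h := by
      intro d hd
      obtain ⟨h, hagree, hp⟩ := ih (k + 1) hd
      refine ⟨h, fun i hi => ?_, hp⟩
      have h1 := hagree i (by omega)
      rwa [Function.update_of_ne (by omega)] at h1
    cases b with
    | false =>
      rw [if_neg (by simp)] at hq
      exact key (g k) (hq (g k))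
    | true =>
      rw [if_pos rfl] at hq
      obtain ⟨d, hd⟩ := hq
      exact key d hd

theorem quantSem_congr (pre : List Bool) (k : ℕ) {P Q : (ℕ → D) → Prop} {g : ℕ → D}
    (h : ∀ h', (∀ i < k, h' i = g i) → (P h' ↔ Q h')) :
    quantSem pre k P g ↔ quantSem pre k Q g :=
  ⟨fun hq => quantSem_mono pre k hq fun h' ha hp => (h h' ha).1 hp,
   fun hq => quantSem_mono pre k hq fun h' ha hp => (h h' ha).2 hp⟩

theorem quantSem_and_right [Nonempty D] (pre : List Bool) (k : ℕ) {P : (ℕ → D) → Prop}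
    {B : Prop} {g : ℕ → D} :
    quantSem pre k (fun h => P h ∧ B) g ↔ quantSem pre k P g ∧ B := by
  constructor
  · intro hq
    refine ⟨quantSem_mono pre k hq fun h _ hp => hp.1, ?_⟩
    obtain ⟨h, -, hp⟩ := quantSem_exists_play pre k hq
    exact hp.2
  · intro ⟨hq, hb⟩
    exact quantSem_mono pre k hq fun h _ hp => ⟨hp, hb⟩

theorem quantSem_append : ∀ (pre pre' : List Bool) (k : ℕ) (P : (ℕ → D) → Prop) (g : ℕ → D),
    quantSem (pre ++ pre') k P g ↔
      quantSem pre k (fun h => quantSem pre' (k + pre.length) P h) g := by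
  intro pre
  induction pre with
  | nil => intro pre' k P g; exact Iff.rfl
  | cons b rest ih =>
    intro pre' k P g
    simp only [List.cons_append, quantSem, List.length_cons]
    rw [show k + (rest.length + 1) = (k + 1) + rest.length from by omega]
    cases b with
    | false =>
      rw [if_neg (by simp), if_neg (by simp)]
      exact forall_congr' fun d => ih pre' (k + 1) P _
    | true =>
      rw [if_pos rfl, if_pos rfl]
      exact exists_congr fun d => ih pre' (k + 1) P _

theorem quantSem_not : ∀ (pre : List Bool) (k : ℕ) (P : (ℕ → D) → Prop) (g : ℕ → D),
    quantSem (pre.map (!·)) k (fun h => ¬ P h) g ↔ ¬ quantSem pre k P g := by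
  intro pre
  induction pre with
  | nil => intro k P g; exact Iff.rfl
  | cons b rest ih =>
    intro k P g
    simp only [List.map_cons, quantSem]
    cases b with
    | false =>
      rw [if_pos (by simp), if_neg (by simp)]
      push_neg
      exact exists_congr fun d => ih (k + 1) P _
    | true =>
      rw [if_neg (by simp), if_pos rfl]
      rw [not_exists]
      exact forall_congr' fun d => ih (k + 1) P _

/-! ### Strategies -/

def Causal (σ : ℕ → (ℕ → D) → D) : Prop :=
  ∀ (j : ℕ) (h h' : ℕ → D), (∀ i < j, h i = h' i) → σ j h = σ j h'

def Cons (pre : List Bool) (k : ℕ) (σ : ℕ → (ℕ → D) → D) (g h : ℕ → D) : Prop :=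
  (∀ i < k, h i = g i) ∧ ∀ j, pre[j]? = some true → h (k + j) = σ (k + j) h

theorem quantSem_strategy [Nonempty D] :
    ∀ (pre : List Bool) (k : ℕ) (P : (ℕ → D) → Prop) (g : ℕ → D),
    quantSem pre k P g →
    (∀ h h', (∀ i < k + pre.length, h i = h' i) → P h → P h') →
    ∃ σ : ℕ → (ℕ → D) → D, Causal σ ∧ ∀ h, Cons pre k σ g h → P h := by
  intro pre
  induction pre with
  | nil =>
    intro k P g hq hins
    refine ⟨fun _ _ => Classical.arbitrary D, fun _ _ _ _ => rfl, fun h hcons => ?_⟩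
    exact hins g h (fun i hi => (hcons.1 i (by simpa using hi)).symm) hq
  | cons b rest ih =>
    intro k P g hq hins
    simp only [quantSem] at hq
    have hins' : ∀ h h', (∀ i < (k + 1) + rest.length, h i = h' i) → P h → P h' :=
      fun h h' ha => hins h h' fun i hi => ha i
        (by simp only [List.length_cons] at hi; omega)
    cases b with
    | true =>
      rw [if_pos rfl] at hq
      obtain ⟨d, hd⟩ := hq
      obtain ⟨σ', hc', hs'⟩ := ih (k + 1) P (Function.update g k d) hd hins'
      refine ⟨fun j h => if j = k then d else σ' j h, ?_, ?_⟩
      · intro j h h' ha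
        by_cases hjk : j = k
        · simp [hjk]
        · simp only [if_neg hjk]
          exact hc' j h h' ha
      · rintro h ⟨hbase, hcons⟩
        have hk : h k = d := by
          have h0 := hcons 0 rfl
          simpa using h0
        apply hs' h
        constructor
        · intro i hi
          by_cases hik : i = k
          · subst hik; rw [hk, Function.update_self]
          · rw [Function.update_of_ne hik]
            exact hbase i (by omega)
        · intro j hj
          have h1 := hcons (j + 1) (by simpa using hj)
          rw [show (k + 1) + j = k + (j + 1) from by omega]
          simpa [show ¬ (k + (j + 1) = k) from by omega] using h1
    | false =>
      rw [if_neg (by simp)] at hq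
      have hIH : ∀ d : D, ∃ σ', Causal σ' ∧
          ∀ h, Cons rest (k + 1) σ' (Function.update g k d) h → P h :=
        fun d => ih (k + 1) P (Function.update g k d) (hq d) hins'
      choose F hF1 hF2 using hIH
      refine ⟨fun j h => if k < j then F (h k) j h else Classical.arbitrary D, ?_, ?_⟩
      · intro j h h' ha
        by_cases hkj : k < j
        · simp only [if_pos hkj]
          rw [ha k hkj]
          exact hF1 (h' k) j h h' ha
        · simp [hkj]
      · rintro h ⟨hbase, hcons⟩
        apply hF2 (h k) h
        constructor
        · intro i hi
          by_cases hik : i = k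
          · subst hik; rw [Function.update_self]
          · rw [Function.update_of_ne hik]
            exact hbase i (by omega)
        · intro j hj
          have h1 := hcons (j + 1) (by simpa using hj)
          rw [show (k + 1) + j = k + (j + 1) from by omega]
          simpa [show k < k + (j + 1) from by omega] using h1

theorem strategy_quantSem :
    ∀ (pre : List Bool) (k : ℕ) (P : (ℕ → D) → Prop) (g : ℕ → D) (σ : ℕ → (ℕ → D) → D),
    Causal σ → (∀ h, Cons pre k σ g h → P h) → quantSem pre k P g := by
  intro pre
  induction pre with
  | nil =>
    intro k P g σ hc hs
    exact hs g ⟨fun _ _ => rfl, fun j hj => by simp at hj⟩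
  | cons b rest ih =>
    intro k P g σ hc hs
    simp only [quantSem]
    cases b with
    | true =>
      rw [if_pos rfl]
      refine ⟨σ k g, ih (k + 1) P (Function.update g k (σ k g)) σ hc ?_⟩
      rintro h ⟨hbase, hcons⟩
      apply hs h
      constructor
      · intro i hi
        have h1 := hbase i (by omega)
        rwa [Function.update_of_ne (by omega)] at h1
      · intro j hj
        match j, hj with
        | 0, hj =>
          have hk : h k = σ k g := by
            have h1 := hbase k (by omega)
            rwa [Function.update_self] at h1
          have : σ k g = σ k h := by
            apply hc
            intro i hi
            have h1 := hbase i (by omega)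
            rw [Function.update_of_ne (by omega)] at h1
            exact h1.symm
          simpa [hk] using this
        | j + 1, hj =>
          have h1 := hcons j (by simpa using hj)
          rw [show k + (j + 1) = (k + 1) + j from by omega]
          exact h1
    | false =>
      rw [if_neg (by simp)]
      intro d
      refine ih (k + 1) P (Function.update g k d) σ hc ?_
      rintro h ⟨hbase, hcons⟩
      apply hs h
      constructor
      · intro i hi
        have h1 := hbase i (by omega)
        rwa [Function.update_of_ne (by omega)] at h1
      · intro j hj
        match j, hj with
        | 0, hj => simp at hj
        | j + 1, hj =>
          have h1 := hcons j (by simpa using hj)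
          rw [show k + (j + 1) = (k + 1) + j from by omega]
          exact h1

/-! ### Completion of a partial play along a strategy -/

variable [Nonempty D]

def followAux (σ : ℕ → (ℕ → D) → D) (pre : List Bool) (m₀ : ℕ) (base : ℕ → D) :
    ℕ → ℕ → D
  | 0 => base
  | n + 1 => fun i =>
      if i = n then
        (if m₀ ≤ n ∧ pre[n]? = some true then σ n (followAux σ pre m₀ base n) else base n)
      else followAux σ pre m₀ base n i

def follow (σ : ℕ → (ℕ → D) → D) (pre : List Bool) (m₀ : ℕ) (base : ℕ → D) : ℕ → D :=
  fun i => followAux σ pre m₀ base (i + 1) i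

omit [Nonempty D] in
theorem followAux_eq (σ : ℕ → (ℕ → D) → D) (pre : List Bool) (m₀ : ℕ) (base : ℕ → D) :
    ∀ n i, i < n → followAux σ pre m₀ base n i = follow σ pre m₀ base i := by
  intro n
  induction n with
  | zero => omega
  | succ n ih =>
    intro i hi
    by_cases hin : i = n
    · subst hin; rfl
    · have h1 : followAux σ pre m₀ base (n + 1) i = followAux σ pre m₀ base n i := by
        simp only [followAux, if_neg hin]
      rw [h1, ih i (by omega)]

theorem follow_base (σ : ℕ → (ℕ → D) → D) (pre : List Bool) (m₀ : ℕ) (base : ℕ → D)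
    (i : ℕ) (hi : ¬ (m₀ ≤ i ∧ pre[i]? = some true)) :
    follow σ pre m₀ base i = base i := by
  show followAux σ pre m₀ base (i + 1) i = base i
  simp only [followAux]
  rw [if_pos trivial, if_neg hi]

theorem follow_sigma (σ : ℕ → (ℕ → D) → D) (pre : List Bool) (m₀ : ℕ) (base : ℕ → D)
    (hc : Causal σ) (i : ℕ) (hi : m₀ ≤ i) (hget : pre[i]? = some true) :
    follow σ pre m₀ base i = σ i (follow σ pre m₀ base) := by
  have h1 : followAux σ pre m₀ base (i + 1) i = σ i (followAux σ pre m₀ base i) := by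
    simp only [followAux]
    rw [if_pos trivial, if_pos (And.intro hi hget)]
  show followAux σ pre m₀ base (i + 1) i = _
  rw [h1]
  exact hc i _ _ fun j hj => followAux_eq σ pre m₀ base i j hj

theorem cons_follow (σ : ℕ → (ℕ → D) → D) (pre : List Bool) (m₀ : ℕ) (base g : ℕ → D)
    (hc : Causal σ)
    (hbelow : ∀ j < m₀, pre[j]? = some true → base j = σ j base) :
    Cons pre 0 σ g (follow σ pre m₀ base) := by
  have hagree : ∀ i < m₀, follow σ pre m₀ base i = base i := by
    intro i hi
    exact follow_base σ pre m₀ base i (by omega)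
  constructor
  · intro i hi; omega
  · intro j hj
    simp only [Nat.zero_add]
    by_cases hjm : m₀ ≤ j
    · exact follow_sigma σ pre m₀ base hc j hjm hj
    · rw [follow_base σ pre m₀ base j (by omega), hbelow j (by omega) hj]
      exact hc j base _ fun i hi => (hagree i (by omega)).symm

end Aux2

end FOADA

namespace FOADA

section Aux3

set_option linter.unusedSectionVars false

variable {D Q : Type} {ar : Q → ℕ}

theorem prenex_eq_def {V : Type} (t s : Term D V) :
    prenex (Fml.eq (Q := Q) (ar := ar) t s) =
      ⟨[], .eq (t.rename Sum.inl) (s.rename Sum.inl)⟩ := rfl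

theorem prenex_not_def {V : Type} (φ : Fml D Q ar V) :
    prenex (Fml.not φ) = ⟨(prenex φ).pre.map (!·), .not (prenex φ).mat⟩ := rfl

theorem prenex_and_def {V : Type} (φ ψ : Fml D Q ar V) :
    prenex (Fml.and φ ψ) = ⟨(prenex φ).pre ++ (prenex ψ).pre,
      .and (prenex φ).mat ((prenex ψ).mat.rename (Sum.map id (· + (prenex φ).pre.length)))⟩ :=
  rfl

theorem prenex_ex_def {V : Type} (φ : Fml D Q ar (Option V)) :
    prenex (Fml.ex φ) = ⟨true :: (prenex φ).pre,
      (prenex φ).mat.rename fun v =>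
        match v with
        | Sum.inl (some x) => Sum.inl x
        | Sum.inl none => Sum.inr 0
        | Sum.inr j => Sum.inr (j + 1)⟩ := rfl

theorem prenex_fv_bound :
    ∀ {V : Type} (φ : Fml D Q ar V) (j : ℕ),
      Sum.inr j ∈ (prenex φ).mat.fv → j < (prenex φ).pre.length
  | _, .eq t s, j, h => by
      simp only [prenex, QF.fv, Set.mem_union] at h
      rcases h with h | h <;>
        · obtain ⟨v, -, hv⟩ := Term.vars_rename Sum.inl _ _ h
          simp at hv
  | _, .pred q ts, j, h => by
      simp only [prenex, QF.fv, Set.mem_iUnion] at h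
      obtain ⟨i, hi⟩ := h
      obtain ⟨v, -, hv⟩ := Term.vars_rename Sum.inl _ _ hi
      simp at hv
  | _, .not φ, j, h => by
      rw [prenex_not_def]
      simpa using prenex_fv_bound φ j h
  | _, .and φ ψ, j, h => by
      rw [prenex_and_def] at h ⊢
      simp only [QF.fv, Set.mem_union, List.length_append] at h ⊢
      rcases h with h | h
      · exact lt_of_lt_of_le (prenex_fv_bound φ j h) (Nat.le_add_right _ _)
      · obtain ⟨v, hv, he⟩ := QF.fv_rename _ _ _ h
        cases v with
        | inl x => rw [Sum.map_inl] at he; simp at he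
        | inr j' =>
          rw [Sum.map_inr] at he
          rw [Sum.inr.injEq] at he
          subst he
          have := prenex_fv_bound ψ j' hv
          omega
  | _, .ex φ, j, h => by
      rw [prenex_ex_def] at h ⊢
      simp only [List.length_cons]
      obtain ⟨v, hv, he⟩ := QF.fv_rename _ _ _ h
      match v with
      | Sum.inl (some x) => simp at he
      | Sum.inl none =>
        simp only [Sum.inr.injEq] at he
        omega
      | Sum.inr j' =>
        simp only [Sum.inr.injEq] at he
        subst he
        have := prenex_fv_bound φ j' hv
        omega

theorem prenex_polarity :
    ∀ {V : Type} (φ : Fml D Q ar V) (b : Bool),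
      φ.Polarity b → (prenex φ).mat.Polarity b
  | _, .eq _ _, _, _ => trivial
  | _, .pred _ _, _, h => h
  | _, .not φ, b, h => prenex_polarity φ (!b) h
  | _, .and φ ψ, b, h =>
      ⟨prenex_polarity φ b h.1, QF.polarity_rename _ _ b (prenex_polarity ψ b h.2)⟩
  | _, .ex φ, b, h => QF.polarity_rename _ _ b (prenex_polarity φ b h)

theorem preds_rename_sub :
    ∀ {V W : Type} (f : V → W) (φ : Fml D Q ar V) (p : Q),
      p ∈ (φ.rename f).preds → p ∈ φ.preds
  | _, _, f, .eq _ _, p, h => h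
  | _, _, f, .pred _ _, p, h => h
  | _, _, f, .not φ, p, h => preds_rename_sub f φ p h
  | _, _, f, .and φ ψ, p, h => by
      rcases h with h | h
      · exact Or.inl (preds_rename_sub f φ p h)
      · exact Or.inr (preds_rename_sub f ψ p h)
  | _, _, f, .ex φ, p, h => preds_rename_sub _ φ p h

theorem preds_stampF (i : ℕ) :
    ∀ {V : Type} (φ : Fml D Q ar V) (p : ℕ × Q), p ∈ (stampF i φ).preds → p.1 = i
  | _, .eq _ _, p, h => absurd h (Set.notMem_empty p)
  | _, .pred q ts, p, h => by
      simp only [stampF, Fml.preds, Set.mem_singleton_iff] at h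
      rw [h]
  | _, .not φ, p, h => preds_stampF i φ p h
  | _, .and φ ψ, p, h => by
      rcases h with h | h
      · exact preds_stampF i φ p h
      · exact preds_stampF i ψ p h
  | _, .ex φ, p, h => preds_stampF i φ p h

theorem prenex_atoms_preds :
    ∀ {V : Type} (φ : Fml D Q ar V), ∀ atm ∈ (prenex φ).mat.atoms, atm.1 ∈ φ.preds
  | _, .eq _ _, atm, h => by simp [prenex, QF.atoms] at h
  | _, .pred q ts, atm, h => by
      simp only [prenex, QF.atoms, List.mem_singleton] at h
      subst h
      rfl
  | _, .not φ, atm, h => prenex_atoms_preds φ atm h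
  | _, .and φ ψ, atm, h => by
      rw [prenex_and_def] at h
      simp only [QF.atoms, List.mem_append] at h
      rcases h with h | h
      · exact Or.inl (prenex_atoms_preds φ atm h)
      · rw [QF.atoms_rename] at h
        simp only [List.mem_map] at h
        obtain ⟨a, ha, rfl⟩ := h
        exact Or.inr (prenex_atoms_preds ψ a ha)
  | _, .ex φ, atm, h => by
      rw [prenex_ex_def] at h
      rw [QF.atoms_rename] at h
      simp only [List.mem_map] at h
      obtain ⟨a, ha, rfl⟩ := h
      exact prenex_atoms_preds φ a ha

/-- Correctness of the prenex normal form, with the prenex variables evaluated at an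
arbitrary offset `k` of a quantifier play. -/
theorem prenex_sat [Nonempty D] (I : Interp D Q ar) :
    ∀ {V : Type} (φ : Fml D Q ar V) (ν : V → D) (k : ℕ) (g : ℕ → D),
      quantSem (prenex φ).pre k
        (fun h => (prenex φ).mat.Sat I (Sum.elim ν fun j => h (k + j))) g ↔ φ.Sat I ν
  | _, .eq t s, ν, k, g => by
      simp only [prenex, quantSem, QF.Sat, Fml.Sat, Term.eval_rename]
      exact Iff.rfl
  | _, .pred q ts, ν, k, g => by
      simp only [prenex, quantSem, QF.Sat, Fml.Sat, Term.eval_rename]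
      exact Iff.rfl
  | _, .not φ, ν, k, g => by
      have h1 : ∀ h : ℕ → D,
          ((prenex (.not φ)).mat.Sat I (Sum.elim ν fun j => h (k + j))) =
            ¬ ((prenex φ).mat.Sat I (Sum.elim ν fun j => h (k + j))) := fun h => rfl
      rw [show (prenex (Fml.not φ)).pre = (prenex φ).pre.map (!·) from rfl]
      refine Iff.trans ?_ (not_congr (prenex_sat I φ ν k g))
      rw [show (fun h : ℕ → D => (prenex (.not φ)).mat.Sat I (Sum.elim ν fun j => h (k + j)))
        = (fun h : ℕ → D => ¬ (prenex φ).mat.Sat I (Sum.elim ν fun j => h (k + j)))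
        from funext fun h => h1 h]
      exact quantSem_not _ k _ g
  | _, .and φ ψ, ν, k, g => by
      set p := prenex φ with hp
      set r := prenex ψ with hr
      have inner : ∀ h : ℕ → D, (∀ i < k, h i = g i) →
          (quantSem r.pre (k + p.pre.length)
            (fun h' => (prenex (.and φ ψ)).mat.Sat I (Sum.elim ν fun j => h' (k + j))) h ↔
            ((prenex φ).mat.Sat I (Sum.elim ν fun j => h (k + j)) ∧ ψ.Sat I ν)) := by
        intro h _
        have step1 : ∀ h' : ℕ → D, (∀ i < k + p.pre.length, h' i = h i) →
            ((prenex (.and φ ψ)).mat.Sat I (Sum.elim ν fun j => h' (k + j)) ↔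
              (r.mat.Sat I (Sum.elim ν fun j => h' ((k + p.pre.length) + j)) ∧
                p.mat.Sat I (Sum.elim ν fun j => h (k + j)))) := by
          intro h' hag
          rw [show (prenex (Fml.and φ ψ)).mat = QF.and p.mat
            (r.mat.rename (Sum.map id (· + p.pre.length))) from rfl]
          show (p.mat.Sat I _ ∧ _) ↔ _
          rw [QF.sat_rename]
          rw [QF.sat_congr I p.mat (ν := Sum.elim ν fun j => h' (k + j))
            (μ := Sum.elim ν fun j => h (k + j)) ?agree]
          case agree =>
            intro v hv
            cases v with
            | inl x => rfl
            | inr j =>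
              have hj := prenex_fv_bound φ j hv
              exact hag (k + j) (by rw [hp]; omega)
          rw [show (fun v => Sum.elim ν (fun j => h' (k + j)) (Sum.map id (· + p.pre.length) v))
            = Sum.elim ν fun j => h' ((k + p.pre.length) + j) from ?eqfun]
          case eqfun =>
            funext v
            cases v with
            | inl x => rfl
            | inr j =>
              show h' (k + (j + p.pre.length)) = h' ((k + p.pre.length) + j)
              congr 1
              omega
          exact and_comm
        calc quantSem r.pre (k + p.pre.length)
              (fun h' => (prenex (.and φ ψ)).mat.Sat I (Sum.elim ν fun j => h' (k + j))) h
            ↔ quantSem r.pre (k + p.pre.length)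
              (fun h' => r.mat.Sat I (Sum.elim ν fun j => h' ((k + p.pre.length) + j)) ∧
                p.mat.Sat I (Sum.elim ν fun j => h (k + j))) h :=
              quantSem_congr _ _ step1
          _ ↔ (quantSem r.pre (k + p.pre.length)
              (fun h' => r.mat.Sat I (Sum.elim ν fun j => h' ((k + p.pre.length) + j))) h ∧
                p.mat.Sat I (Sum.elim ν fun j => h (k + j))) := quantSem_and_right _ _
          _ ↔ (ψ.Sat I ν ∧ p.mat.Sat I (Sum.elim ν fun j => h (k + j))) :=
              and_congr_left' (prenex_sat I ψ ν (k + p.pre.length) h)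
          _ ↔ _ := and_comm
      calc quantSem (prenex (.and φ ψ)).pre k
            (fun h => (prenex (.and φ ψ)).mat.Sat I (Sum.elim ν fun j => h (k + j))) g
          ↔ quantSem p.pre k (fun h => quantSem r.pre (k + p.pre.length)
              (fun h' => (prenex (.and φ ψ)).mat.Sat I (Sum.elim ν fun j => h' (k + j))) h) g := by
            rw [show (prenex (Fml.and φ ψ)).pre = p.pre ++ r.pre from rfl]
            exact quantSem_append _ _ _ _ _
        _ ↔ quantSem p.pre k
            (fun h => p.mat.Sat I (Sum.elim ν fun j => h (k + j)) ∧ ψ.Sat I ν) g :=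
            quantSem_congr _ _ inner
        _ ↔ (quantSem p.pre k (fun h => p.mat.Sat I (Sum.elim ν fun j => h (k + j))) g ∧
            ψ.Sat I ν) := quantSem_and_right _ _
        _ ↔ (φ.Sat I ν ∧ ψ.Sat I ν) := and_congr_left' (prenex_sat I φ ν k g)
        _ ↔ (Fml.and φ ψ).Sat I ν := Iff.rfl
  | _, .ex φ, ν, k, g => by
      rw [show (prenex (Fml.ex φ)).pre = true :: (prenex φ).pre from rfl]
      simp only [quantSem]
      rw [if_pos trivial]
      show (∃ d : D, _) ↔ (∃ d : D, φ.Sat I fun o => o.elim d ν)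
      refine exists_congr fun d => ?_
      refine Iff.trans (quantSem_congr _ _ ?_) (prenex_sat I φ (fun o => o.elim d ν)
        (k + 1) (Function.update g k d))
      intro h' hag
      have hk : h' k = d := by
        have h1 := hag k (by omega)
        rwa [Function.update_self] at h1
      rw [show (prenex (Fml.ex φ)).mat = (prenex φ).mat.rename (fun v =>
        match v with
        | Sum.inl (some x) => Sum.inl x
        | Sum.inl none => Sum.inr 0
        | Sum.inr j => Sum.inr (j + 1)) from rfl]
      rw [QF.sat_rename]
      apply iff_of_eq
      congr 1
      funext v
      match v with
      | Sum.inl (some x) => rfl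
      | Sum.inl none => simpa using hk
      | Sum.inr j =>
        show h' (k + (j + 1)) = h' ((k + 1) + j)
        congr 1
        omega

end Aux3

end FOADA

namespace FOADA

section Aux4

set_option linter.unusedSectionVars false

theorem Fml.polarity_stampF {D Q : Type} {ar : Q → ℕ} (i : ℕ) :
    ∀ {V : Type} (φ : Fml D Q ar V) (b : Bool), φ.Polarity b → (stampF i φ).Polarity b
  | _, .eq _ _, _, _ => trivial
  | _, .pred _ _, _, h => h
  | _, .not φ, b, h => Fml.polarity_stampF i φ (!b) h
  | _, .and φ ψ, b, h => ⟨Fml.polarity_stampF i φ b h.1, Fml.polarity_stampF i ψ b h.2⟩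
  | _, .ex φ, b, h => Fml.polarity_stampF i φ b h

universe u_fold

theorem foldl_take_succ {β : Type u_fold} {m : ℕ} (f : β → Fin m → β) (b : β) (i : ℕ)
    (hi : i < m) :
    ((List.finRange m).take (i + 1)).foldl f b =
      f (((List.finRange m).take i).foldl f b) ⟨i, hi⟩ := by
  rw [List.take_succ]
  rw [show (List.finRange m)[i]? = some ⟨i, hi⟩ from by
    rw [List.getElem?_eq_getElem (by simpa using hi)]
    simp [List.getElem_finRange]]
  simp [List.foldl_append]

variable {Sig X D : Type} [Nonempty D]

/-- The "remaining unfolding" of the automaton, with fuel `k` (number of remaining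
letters) : the predicate-free formula expressing acceptance from a configuration of `q`
at stage `α.length - k`. -/
def Gfam (A : FOAA Sig X D) (α : List Sig) :
    (k : ℕ) → (q : A.Q) → Fml D Empty (fun e => e.elim) ((ℕ × X) ⊕ Fin (A.ar q))
  | 0, q => if q ∈ A.F then Fml.tt else Fml.ff
  | k + 1, q =>
    match α[α.length - (k + 1)]? with
    | some a => Fml.substPred (fun q' => Gfam A α k q') Sum.inl
        ((A.delta q a).rename (Sum.map (fun x => (α.length - k, x)) id))
    | none => Fml.tt

/-- The canonical interpretation of the time-stamped predicates. -/
def Istar (A : FOAA Sig X D) (α : List Sig) (ν : (ℕ × X) → D) :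
    Interp D (ℕ × A.Q) (fun p => A.ar p.2) :=
  fun p => {d | p.1 ≤ α.length ∧
    (Gfam A α (α.length - p.1) p.2).Sat (emptyInterp D) (Sum.elim ν d)}

theorem Gfam_succ_eq (A : FOAA Sig X D) (α : List Sig) (k j : ℕ) (hj : j < α.length)
    (hk : k + 1 = α.length - j) (q : A.Q) :
    Gfam A α (k + 1) q = Fml.substPred (fun q' => Gfam A α k q') Sum.inl
      ((A.delta q (α.get ⟨j, hj⟩)).rename (Sum.map (fun x => (j + 1, x)) id)) := by
  have h1 : α.length - (k + 1) = j := by omega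
  have h2 : α.length - k = j + 1 := by omega
  simp only [Gfam]
  rw [h1, h2, List.getElem?_eq_getElem hj]; rfl

theorem mem_Istar_iff (A : FOAA Sig X D) (α : List Sig) (ν : (ℕ × X) → D) (j : ℕ)
    (hj : j < α.length) (q : A.Q) (d : Fin (A.ar q) → D) :
    d ∈ Istar A α ν (j, q) ↔
      (A.ruleF (j + 1) q (α.get ⟨j, hj⟩)).Sat (Istar A α ν) (Sum.elim ν d) := by
  have hk : α.length - j = (α.length - j - 1) + 1 := by omega
  show (j ≤ α.length ∧ _) ↔ _
  rw [and_iff_right (Nat.le_of_lt hj)]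
  rw [hk, Gfam_succ_eq A α _ j hj (by omega) q]
  rw [Fml.sat_substPred]
  erw [Fml.sat_rename]
  unfold FOAA.ruleF
  rw [Fml.sat_rename, Fml.sat_stampF]
  have hI : (fun q' : A.Q => {e | (Gfam A α (α.length - j - 1) q').Sat (emptyInterp D)
        (Sum.elim (fun v0 => Sum.elim ν d (Sum.inl v0)) e)})
      = (fun q' : A.Q => Istar A α ν (j + 1, q')) := by
    funext q'
    ext e
    show _ ↔ (j + 1 ≤ α.length ∧
      (Gfam A α (α.length - (j + 1)) q').Sat (emptyInterp D) (Sum.elim ν e))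
    rw [and_iff_right (by omega : j + 1 ≤ α.length)]
    rw [show α.length - (j + 1) = α.length - j - 1 from by omega]
    exact Iff.rfl
  rw [hI]

theorem mem_Istar_final_of_F (A : FOAA Sig X D) (α : List Sig) (ν : (ℕ × X) → D)
    (q : A.Q) (hq : q ∈ A.F) (d : Fin (A.ar q) → D) : d ∈ Istar A α ν (α.length, q) := by
  refine ⟨le_rfl, ?_⟩
  rw [Nat.sub_self]
  simp only [Gfam, if_pos hq]
  exact Fml.sat_tt _ _

theorem not_mem_Istar_final (A : FOAA Sig X D) (α : List Sig) (ν : (ℕ × X) → D)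
    (q : A.Q) (hq : q ∉ A.F) (d : Fin (A.ar q) → D) : d ∉ Istar A α ν (α.length, q) := by
  rintro ⟨-, h⟩
  rw [Nat.sub_self] at h
  simp only [Gfam, if_neg hq] at h
  exact Fml.sat_ff _ _ h

/-! ### The bridge between `phiHat` and the canonical interpretation -/

def phiStage (A : FOAA Sig X D) (α : List Sig) (i : ℕ) : Fml D A.Q A.ar (ℕ × X) :=
  ((List.finRange α.length).take i).foldl
    (fun acc j =>
      Fml.substPred
        (fun q => (A.delta q (α.get j)).rename (Sum.map (fun x => (j.val + 1, x)) id))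
        id acc)
    (A.init.rename fun v : Empty => v.elim)

theorem phiHatN_eq_phiStage (A : FOAA Sig X D) (α : List Sig) :
    A.phiHatN α = phiStage A α α.length := by
  unfold FOAA.phiHatN phiStage
  rw [List.take_of_length_le (le_of_eq (List.length_finRange))]

theorem bridge (A : FOAA Sig X D) (α : List Sig) (ν : (ℕ × X) → D) :
    (A.phiHat α).Sat (emptyInterp D) ν ↔
      ((stampF 0 A.init).rename (fun v : Empty => v.elim) :
        Fml D (ℕ × A.Q) (fun p => A.ar p.2) (ℕ × X)).Sat (Istar A α ν) ν := by
  rw [Fml.sat_rename, Fml.sat_stampF]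
  unfold FOAA.phiHat
  rw [Fml.sat_substPred, phiHatN_eq_phiStage]
  have key : ∀ i, i ≤ α.length →
      ((phiStage A α i).Sat
        (fun q => {d | (Gfam A α (α.length - i) q).Sat (emptyInterp D) (Sum.elim ν d)}) ν ↔
      ((A.init.rename fun v : Empty => v.elim) :
        Fml D A.Q A.ar (ℕ × X)).Sat
        (fun q => {d | (Gfam A α α.length q).Sat (emptyInterp D) (Sum.elim ν d)}) ν) := by
    intro i
    induction i with
    | zero => intro _; exact Iff.rfl
    | succ i ih =>
      intro hi1
      have hstep : phiStage A α (i + 1) = Fml.substPred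
          (fun q => (A.delta q (α.get ⟨i, by omega⟩)).rename
            (Sum.map (fun x => (i + 1, x)) id)) id (phiStage A α i) :=
        foldl_take_succ _ _ i (by omega)
      erw [hstep, Fml.sat_substPred]
      have hKJ : (fun q : A.Q => {d | ((A.delta q (α.get ⟨i, by omega⟩)).rename
            (Sum.map (fun x => (i + 1, x)) id)).Sat
            (fun q' => {e | (Gfam A α (α.length - (i + 1)) q').Sat (emptyInterp D)
              (Sum.elim ν e)})
            (Sum.elim (fun v0 => ν (id v0)) d)})
          = (fun q : A.Q => {d | (Gfam A α (α.length - i) q).Sat (emptyInterp D)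
              (Sum.elim ν d)}) := by
        funext q
        ext d
        simp only [Set.mem_setOf_eq]
        rw [show α.length - i = (α.length - i - 1) + 1 from by omega,
          Gfam_succ_eq A α _ i (by omega) (by omega) q,
          Fml.sat_substPred]
        rw [show α.length - (i + 1) = α.length - i - 1 from by omega]
        exact Iff.rfl
      rw [hKJ]
      exact ih (by omega)
  have h2 := key α.length le_rfl
  rw [Nat.sub_self] at h2
  have hJF : (fun q : A.Q => {d | ((if q ∈ A.F then Fml.tt else Fml.ff) :
        Fml D Empty (fun e => e.elim) ((ℕ × X) ⊕ Fin (A.ar q))).Sat (emptyInterp D)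
        (Sum.elim (fun v0 => ν (id v0)) d)})
      = (fun q : A.Q => {d | (Gfam A α 0 q).Sat (emptyInterp D) (Sum.elim ν d)}) := by
    funext q
    ext d
    exact Iff.rfl
  rw [hJF, h2]
  erw [Fml.sat_rename]
  have hsl : (fun q : A.Q => Istar A α ν (0, q))
      = (fun q : A.Q => {d | (Gfam A α α.length q).Sat (emptyInterp D) (Sum.elim ν d)}) := by
    funext q
    ext d
    show (0 ≤ α.length ∧ _) ↔ _
    rw [and_iff_right (Nat.zero_le _)]
    exact Iff.rfl
  rw [hsl]

/-! ### Structure of the staged prenex acceptance formula -/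

variable (A : FOAA Sig X D)

/-- Atoms over the time-stamped signature. -/
abbrev AtomT : Type := Σ p : ℕ × A.Q, Fin (A.ar p.2) → Term D ((ℕ × X) ⊕ ℕ)

/-- Prenex formulas over the time-stamped signature. -/
abbrev PFT : Type := PF D (ℕ × A.Q) (fun p => A.ar p.2) (ℕ × X)

/-- The instantiated implication added for an atom, with prenex-variable offset `o`. -/
def implTheta (j : ℕ) (a : Sig)
    (atm : Σ p : ℕ × A.Q, Fin (A.ar p.2) → Term D ((ℕ × X) ⊕ ℕ)) (o : ℕ) :
    QF D (ℕ × A.Q) (fun p => A.ar p.2) ((ℕ × X) ⊕ ℕ) :=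
  QF.imp (.pred atm.1 atm.2)
    ((prenex (A.ruleF (j + 1) atm.1.2 a)).mat.subst fun v =>
      match v with
      | Sum.inl (Sum.inl x) => Term.var (Sum.inl x)
      | Sum.inl (Sum.inr i) => atm.2 i
      | Sum.inr jj => Term.var (Sum.inr (jj + o)))

def stepAcc (j : ℕ) (a : Sig) (acc : PF D (ℕ × A.Q) (fun p => A.ar p.2) (ℕ × X))
    (atm : Σ p : ℕ × A.Q, Fin (A.ar p.2) → Term D ((ℕ × X) ⊕ ℕ)) :
    PF D (ℕ × A.Q) (fun p => A.ar p.2) (ℕ × X) :=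
  ⟨acc.pre ++ (prenex (A.ruleF (j + 1) atm.1.2 a)).pre,
    .and acc.mat (implTheta A j a atm acc.pre.length)⟩

theorem stepPF_eq (j : ℕ) (a : Sig) (Θ : PF D (ℕ × A.Q) (fun p => A.ar p.2) (ℕ × X)) :
    A.stepPF j a Θ =
      (Θ.mat.atoms.filter fun atm => atm.1.1 == j).foldl (stepAcc A j a) Θ := rfl

theorem foldl_stepAcc_pre (j : ℕ) (a : Sig) :
    ∀ (L : List (Σ p : ℕ × A.Q, Fin (A.ar p.2) → Term D ((ℕ × X) ⊕ ℕ)))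
      (acc : PF D (ℕ × A.Q) (fun p => A.ar p.2) (ℕ × X)),
      ∃ ext, (L.foldl (stepAcc A j a) acc).pre = acc.pre ++ ext := by
  intro L
  induction L with
  | nil => exact fun acc => ⟨[], by simp⟩
  | cons atm L ih =>
    intro acc
    obtain ⟨ext, he⟩ := ih (stepAcc A j a acc atm)
    refine ⟨(prenex (A.ruleF (j + 1) atm.1.2 a)).pre ++ ext, ?_⟩
    rw [List.foldl_cons, he]
    show (acc.pre ++ _) ++ ext = _
    rw [List.append_assoc]

theorem foldl_stepAcc_entail (j : ℕ) (a : Sig) :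
    ∀ (L : List (AtomT A)) (acc : PFT A)
      (I : Interp D (ℕ × A.Q) (fun p => A.ar p.2)) (μ : (ℕ × X) ⊕ ℕ → D),
      QF.Sat I (L.foldl (stepAcc A j a) acc).mat μ → QF.Sat I acc.mat μ := by
  intro L
  induction L with
  | nil => exact fun acc I μ h => h
  | cons atm L ih =>
    intro acc I μ h
    exact (ih (stepAcc A j a acc atm) I μ h).1

theorem foldl_stepAcc_atoms (j : ℕ) (a : Sig) :
    ∀ (L : List (AtomT A)) (acc : PFT A) (atm' : AtomT A), atm' ∈ acc.mat.atoms →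
      atm' ∈ (L.foldl (stepAcc A j a) acc).mat.atoms := by
  intro L
  induction L with
  | nil => exact fun acc atm' h => h
  | cons atm L ih =>
    intro acc atm' h
    exact ih (stepAcc A j a acc atm) atm' (List.mem_append_left _ h)

theorem foldl_stepAcc_bound (j : ℕ) (a : Sig) :
    ∀ (L : List (AtomT A)) (acc : PFT A),
      (∀ j', Sum.inr j' ∈ acc.mat.fv → j' < acc.pre.length) →
      (∀ atm ∈ L, ∀ (i : Fin (A.ar atm.1.2)) j', Sum.inr j' ∈ (atm.2 i).vars →
        j' < acc.pre.length) →
      ∀ j', Sum.inr j' ∈ (L.foldl (stepAcc A j a) acc).mat.fv →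
        j' < (L.foldl (stepAcc A j a) acc).pre.length := by
  intro L
  induction L with
  | nil => exact fun acc h1 _ => h1
  | cons atm L ih =>
    intro acc h1 h2
    apply ih (stepAcc A j a acc atm)
    · intro j' hj'
      show j' < (acc.pre ++ (prenex (A.ruleF (j + 1) atm.1.2 a)).pre).length
      rw [List.length_append]
      rcases hj' with hj' | hj'
      · have := h1 j' hj'
        omega
      · rcases hj' with hj' | hj'
        · -- atom of the hypothesis
          simp only [QF.fv, Set.mem_iUnion] at hj'
          obtain ⟨i, hi⟩ := hj'
          have := h2 atm (List.mem_cons_self) i j' hi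
          omega
        · -- the instantiated conclusion
          obtain ⟨v, hv, hv'⟩ := QF.fv_subst _ _ _ hj'
          match v with
          | Sum.inl (Sum.inl x) => simp [Term.vars] at hv'
          | Sum.inl (Sum.inr i) =>
            have := h2 atm (List.mem_cons_self) i j' hv'
            omega
          | Sum.inr jj =>
            simp only [Term.vars, Set.mem_singleton_iff, Sum.inr.injEq] at hv'
            have := prenex_fv_bound _ jj hv
            omega
    · intro atm' hm i j' hv
      have := h2 atm' (List.mem_cons_of_mem _ hm) i j' hv
      show j' < (acc.pre ++ (prenex (A.ruleF (j + 1) atm.1.2 a)).pre).length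
      rw [List.length_append]
      omega

theorem foldl_stepAcc_obl (j : ℕ) (a : Sig) :
    ∀ (L : List (AtomT A)) (acc : PFT A) (atm : AtomT A), atm ∈ L →
      ∃ o, acc.pre.length ≤ o ∧
        (∀ idx, idx < (prenex (A.ruleF (j + 1) atm.1.2 a)).pre.length →
          (L.foldl (stepAcc A j a) acc).pre[o + idx]? =
            (prenex (A.ruleF (j + 1) atm.1.2 a)).pre[idx]?) ∧
        (∀ (I : Interp D (ℕ × A.Q) (fun p => A.ar p.2)) (μ : (ℕ × X) ⊕ ℕ → D),
          QF.Sat I (L.foldl (stepAcc A j a) acc).mat μ →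
            QF.Sat I (implTheta A j a atm o) μ) ∧
        (∀ atm', atm' ∈ (implTheta A j a atm o).atoms →
          atm' ∈ (L.foldl (stepAcc A j a) acc).mat.atoms) := by
  intro L
  induction L with
  | nil => intro acc atm h; simp at h
  | cons atm0 L ih =>
    intro acc atm hm
    rcases List.mem_cons.1 hm with rfl | hm
    · refine ⟨acc.pre.length, le_rfl, ?_, ?_, ?_⟩
      · intro idx hidx
        obtain ⟨ext, he⟩ := foldl_stepAcc_pre A j a L (stepAcc A j a acc atm)
        rw [List.foldl_cons, he]
        show ((acc.pre ++ (prenex (A.ruleF (j + 1) atm.1.2 a)).pre) ++ ext)[_]? = _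
        rw [List.getElem?_append_left (by rw [List.length_append]; omega),
          List.getElem?_append_right (by omega)]
        congr 1
        omega
      · intro I μ h
        have h1 := foldl_stepAcc_entail A j a L (stepAcc A j a acc atm) I μ
          (by rw [List.foldl_cons] at h; exact h)
        exact h1.2
      · intro atm' h'
        rw [List.foldl_cons]
        apply foldl_stepAcc_atoms A j a L (stepAcc A j a acc atm) atm'
        exact List.mem_append_right _ h'
    · obtain ⟨o, h1, h2, h3, h4⟩ := ih (stepAcc A j a acc atm0) atm hm
      refine ⟨o, le_trans ?_ h1, ?_, ?_, ?_⟩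
      · show acc.pre.length ≤ (acc.pre ++ _).length
        rw [List.length_append]
        omega
      · intro idx hidx
        rw [List.foldl_cons]
        exact h2 idx hidx
      · intro I μ h
        rw [List.foldl_cons] at h
        exact h3 I μ h
      · intro atm' h'
        rw [List.foldl_cons]
        exact h4 atm' h'

end Aux4

end FOADA

namespace FOADA

section Aux5

set_option linter.unusedSectionVars false

variable {Sig X D : Type} [Nonempty D] (A : FOAA Sig X D)

theorem thetaStage_zero (α : List Sig) :
    A.thetaHatStage α 0 = prenex ((stampF 0 A.init).rename fun v : Empty => v.elim) := rfl

theorem thetaHatN_eq (α : List Sig) : A.thetaHatN α = A.thetaHatStage α α.length := rfl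

theorem thetaStage_succ (α : List Sig) (i : ℕ) (hi : i < α.length) :
    A.thetaHatStage α (i + 1) =
      ((A.thetaHatStage α i).mat.atoms.filter fun atm => atm.1.1 == i).foldl
        (stepAcc A i (α.get ⟨i, hi⟩)) (A.thetaHatStage α i) := by
  unfold FOAA.thetaHatStage
  rw [foldl_take_succ _ _ i hi]
  exact stepPF_eq A i (α.get ⟨i, hi⟩) _

theorem theta_VB (α : List Sig) : ∀ i, i ≤ α.length →
    ∀ j', Sum.inr j' ∈ (A.thetaHatStage α i).mat.fv →
      j' < (A.thetaHatStage α i).pre.length := by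
  intro i
  induction i with
  | zero => intro _; rw [thetaStage_zero]; exact prenex_fv_bound _
  | succ i ih =>
    intro hi
    rw [thetaStage_succ A α i (by omega)]
    apply foldl_stepAcc_bound
    · exact ih (by omega)
    · intro atm hm i' j' hv
      have hmem := (List.mem_filter.1 hm).1
      exact ih (by omega) j' (QF.atom_vars_sub_fv _ atm hmem i' hv)

theorem theta_lift (α : List Sig) : ∀ m i, i + m = α.length →
    (∃ ext, (A.thetaHatN α).pre = (A.thetaHatStage α i).pre ++ ext) ∧
    (∀ (I : Interp D (ℕ × A.Q) (fun p => A.ar p.2)) (μ : (ℕ × X) ⊕ ℕ → D),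
      QF.Sat I (A.thetaHatN α).mat μ → QF.Sat I (A.thetaHatStage α i).mat μ) := by
  intro m
  induction m with
  | zero =>
    intro i hi
    have h : i = α.length := by omega
    subst h
    exact ⟨⟨[], (List.append_nil _).symm⟩, fun _ _ h => h⟩
  | succ m ih =>
    intro i hi
    obtain ⟨⟨ext1, he1⟩, hent⟩ := ih (i + 1) (by omega)
    rw [thetaStage_succ A α i (by omega)] at he1 hent
    obtain ⟨ext2, he2⟩ := foldl_stepAcc_pre A i (α.get ⟨i, by omega⟩)
      ((A.thetaHatStage α i).mat.atoms.filter fun atm => atm.1.1 == i)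
      (A.thetaHatStage α i)
    constructor
    · exact ⟨ext2 ++ ext1, by rw [he1, he2, List.append_assoc]⟩
    · intro I μ h
      exact foldl_stepAcc_entail A i _ _ _ I μ (hent I μ h)

/-- One step of the final-constraint instantiation. -/
def finStep (m : QF D (ℕ × A.Q) (fun p => A.ar p.2) ((ℕ × X) ⊕ ℕ)) (atm : AtomT A) :
    QF D (ℕ × A.Q) (fun p => A.ar p.2) ((ℕ × X) ⊕ ℕ) :=
  if atm.1.2 ∈ A.F then m
  else .and m (QF.imp (.pred atm.1 atm.2)
    (.not (.eq (Term.const (Classical.arbitrary D)) (Term.const (Classical.arbitrary D)))))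

theorem thetaHat_pre (α : List Sig) : (A.thetaHat α).pre = (A.thetaHatN α).pre := rfl

theorem thetaHat_mat (α : List Sig) : (A.thetaHat α).mat =
    ((A.thetaHatN α).mat.atoms.filter fun atm => atm.1.1 == α.length).foldl (finStep A)
      (A.thetaHatN α).mat := rfl

theorem foldl_finStep_entail :
    ∀ (L : List (AtomT A)) (m : QF D (ℕ × A.Q) (fun p => A.ar p.2) ((ℕ × X) ⊕ ℕ))
      (I : Interp D (ℕ × A.Q) (fun p => A.ar p.2)) (μ : (ℕ × X) ⊕ ℕ → D),
      QF.Sat I (L.foldl (finStep A) m) μ → QF.Sat I m μ := by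
  intro L
  induction L with
  | nil => exact fun m I μ h => h
  | cons atm L ih =>
    intro m I μ h
    have h' := ih (finStep A m atm) I μ (by rwa [List.foldl_cons] at h)
    by_cases hF : atm.1.2 ∈ A.F
    · rwa [finStep, if_pos hF] at h'
    · rw [finStep, if_neg hF] at h'
      exact h'.1

theorem foldl_finStep_obl :
    ∀ (L : List (AtomT A)) (m : QF D (ℕ × A.Q) (fun p => A.ar p.2) ((ℕ × X) ⊕ ℕ))
      (atm : AtomT A), atm ∈ L → atm.1.2 ∉ A.F →
      ∀ (I : Interp D (ℕ × A.Q) (fun p => A.ar p.2)) (μ : (ℕ × X) ⊕ ℕ → D),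
        QF.Sat I (L.foldl (finStep A) m) μ → ¬ QF.Sat I (.pred atm.1 atm.2) μ := by
  intro L
  induction L with
  | nil => intro m atm hm; simp at hm
  | cons atm0 L ih =>
    intro m atm hm hF I μ h hpred
    rcases List.mem_cons.1 hm with rfl | hm
    · have h' := foldl_finStep_entail A L (finStep A m atm) I μ
        (by rwa [List.foldl_cons] at h)
      rw [finStep, if_neg hF] at h'
      exact h'.2 ⟨hpred, fun hne => hne rfl⟩
    · exact ih (finStep A m atm0) atm hm hF I μ (by rwa [List.foldl_cons] at h) hpred

theorem foldl_finStep_intro :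
    ∀ (L : List (AtomT A)) (m : QF D (ℕ × A.Q) (fun p => A.ar p.2) ((ℕ × X) ⊕ ℕ))
      (I : Interp D (ℕ × A.Q) (fun p => A.ar p.2)) (μ : (ℕ × X) ⊕ ℕ → D),
      QF.Sat I m μ →
      (∀ atm ∈ L, atm.1.2 ∉ A.F → ¬ QF.Sat I (.pred atm.1 atm.2) μ) →
      QF.Sat I (L.foldl (finStep A) m) μ := by
  intro L
  induction L with
  | nil => exact fun m I μ hm _ => hm
  | cons atm0 L ih =>
    intro m I μ hm hno
    rw [List.foldl_cons]
    apply ih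
    · by_cases hF : atm0.1.2 ∈ A.F
      · rwa [finStep, if_pos hF]
      · rw [finStep, if_neg hF]
        exact ⟨hm, fun hc => hno atm0 (List.mem_cons_self) hF hc.1⟩
    · exact fun atm hmem => hno atm (List.mem_cons_of_mem _ hmem)

theorem foldl_finStep_bound (B : ℕ) :
    ∀ (L : List (AtomT A)) (m : QF D (ℕ × A.Q) (fun p => A.ar p.2) ((ℕ × X) ⊕ ℕ)),
      (∀ j', Sum.inr j' ∈ m.fv → j' < B) →
      (∀ atm ∈ L, ∀ (i : Fin (A.ar atm.1.2)) j', Sum.inr j' ∈ (atm.2 i).vars → j' < B) →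
      ∀ j', Sum.inr j' ∈ (L.foldl (finStep A) m).fv → j' < B := by
  intro L
  induction L with
  | nil => exact fun m h1 _ => h1
  | cons atm L ih =>
    intro m h1 h2
    rw [List.foldl_cons]
    apply ih
    · intro j' hj'
      by_cases hF : atm.1.2 ∈ A.F
      · rw [finStep, if_pos hF] at hj'
        exact h1 j' hj'
      · rw [finStep, if_neg hF] at hj'
        rcases hj' with hj' | hj'
        · exact h1 j' hj'
        · rcases hj' with hj' | hj'
          · simp only [QF.fv, Set.mem_iUnion] at hj'
            obtain ⟨i, hi⟩ := hj'
            exact h2 atm (List.mem_cons_self) i j' hi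
          · rcases hj' with hj' | hj' <;>
            · simp only [Term.const, Term.vars, Set.mem_iUnion] at hj'
              obtain ⟨i, -⟩ := hj'
              exact absurd i.2 (by omega)
    · exact fun atm' hm => h2 atm' (List.mem_cons_of_mem _ hm)

theorem thetaHat_VB (α : List Sig) :
    ∀ j', Sum.inr j' ∈ (A.thetaHat α).mat.fv → j' < (A.thetaHat α).pre.length := by
  rw [thetaHat_mat, thetaHat_pre]
  apply foldl_finStep_bound
  · exact theta_VB A α α.length le_rfl
  · intro atm hm i j' hv
    have hmem := (List.mem_filter.1 hm).1
    exact theta_VB A α α.length le_rfl j' (QF.atom_vars_sub_fv _ atm hmem i hv)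

theorem stage_zero_atoms_stamp (α : List Sig) :
    ∀ atm ∈ (A.thetaHatStage α 0).mat.atoms, atm.1.1 = 0 := by
  rw [thetaStage_zero]
  intro atm hm
  have h1 := prenex_atoms_preds _ atm hm
  have h2 := preds_rename_sub _ _ _ h1
  exact preds_stampF 0 _ atm.1 h2

theorem implTheta_atoms_stamp (j : ℕ) (a : Sig) (atm : AtomT A) (o : ℕ) :
    ∀ atm' ∈ (implTheta A j a atm o).atoms, atm' = atm ∨ atm'.1.1 = j + 1 := by
  intro atm' hm
  have hm' : atm' ∈ [atm] ++ ((prenex (A.ruleF (j + 1) atm.1.2 a)).mat.subst fun v =>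
      match v with
      | Sum.inl (Sum.inl x) => Term.var (Sum.inl x)
      | Sum.inl (Sum.inr i) => atm.2 i
      | Sum.inr jj => Term.var (Sum.inr (jj + o))).atoms := hm
  rcases List.mem_append.1 hm' with hm' | hm'
  · exact Or.inl (List.mem_singleton.1 hm')
  · right
    rw [QF.atoms_subst] at hm'
    obtain ⟨a', ha', rfl⟩ := List.mem_map.1 hm'
    have h1 := prenex_atoms_preds _ a' ha'
    have h2 := preds_rename_sub _ _ _ h1
    exact preds_stampF (j + 1) _ a'.1 h2

theorem stage_zero_positive (α : List Sig) : (A.thetaHatStage α 0).mat.Polarity true := by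
  rw [thetaStage_zero]
  exact prenex_polarity _ true
    (Fml.polarity_rename _ _ true (Fml.polarity_stampF 0 _ true A.init_pos))

theorem concl_positive (j : ℕ) (a : Sig) (atm : AtomT A) (o : ℕ) :
    (((prenex (A.ruleF (j + 1) atm.1.2 a)).mat.subst fun v =>
      match v with
      | Sum.inl (Sum.inl x) => Term.var (Sum.inl x)
      | Sum.inl (Sum.inr i) => atm.2 i
      | Sum.inr jj => Term.var (Sum.inr (jj + o))) :
      QF D (ℕ × A.Q) (fun p => A.ar p.2) ((ℕ × X) ⊕ ℕ)).Polarity true := by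
  apply QF.polarity_subst
  exact prenex_polarity _ true
    (Fml.polarity_rename _ _ true (Fml.polarity_stampF (j + 1) _ true (A.delta_pos _ a)))

theorem mem_filter_stamp {L : List (AtomT A)} {atm : AtomT A} {j : ℕ}
    (h1 : atm ∈ L) (h2 : atm.1.1 = j) :
    atm ∈ L.filter fun atm => atm.1.1 == j :=
  List.mem_filter.2 ⟨h1, by simpa using h2⟩

theorem stamp_of_mem_filter {L : List (AtomT A)} {atm : AtomT A} {j : ℕ}
    (h : atm ∈ L.filter fun atm => atm.1.1 == j) : atm.1.1 = j := by
  have := (List.mem_filter.1 h).2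
  simpa using this

end Aux5

end FOADA

namespace FOADA

section Aux6

set_option linter.unusedSectionVars false

variable {Sig X D : Type} [Nonempty D] (A : FOAA Sig X D)

def thSub (atm : AtomT A) (o : ℕ) :
    ((ℕ × X) ⊕ Fin (A.ar atm.1.2)) ⊕ ℕ → Term D ((ℕ × X) ⊕ ℕ) := fun v =>
  match v with
  | Sum.inl (Sum.inl x) => Term.var (Sum.inl x)
  | Sum.inl (Sum.inr i) => atm.2 i
  | Sum.inr jj => Term.var (Sum.inr (jj + o))

theorem implTheta_eq (j : ℕ) (a : Sig) (atm : AtomT A) (o : ℕ) :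
    implTheta A j a atm o = QF.imp (.pred atm.1 atm.2)
      ((prenex (A.ruleF (j + 1) atm.1.2 a)).mat.subst (thSub A atm o)) := rfl

theorem thSub_eval (atm : AtomT A) (o : ℕ) (ν : (ℕ × X) → D) (f' : ℕ → D)
    (d : Fin (A.ar atm.1.2) → D) (hd : ∀ i, (atm.2 i).eval (Sum.elim ν f') = d i) :
    (fun v => ((thSub A atm o) v).eval (Sum.elim ν f')) =
      Sum.elim (Sum.elim ν d) fun jj => f' (o + jj) := by
  funext v
  match v with
  | Sum.inl (Sum.inl x) => rfl
  | Sum.inl (Sum.inr i) => exact hd i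
  | Sum.inr jj =>
    show f' (jj + o) = f' (o + jj)
    congr 1
    omega

theorem thSub_concl_atoms_stamp (j : ℕ) (a : Sig) (atm : AtomT A) (o : ℕ) :
    ∀ atm' ∈ ((prenex (A.ruleF (j + 1) atm.1.2 a)).mat.subst (thSub A atm o)).atoms,
      atm'.1.1 = j + 1 := by
  intro atm' hm
  rw [QF.atoms_subst] at hm
  obtain ⟨a', ha', rfl⟩ := List.mem_map.1 hm
  have h1 := prenex_atoms_preds _ a' ha'
  have h2 := preds_rename_sub _ _ _ h1
  exact preds_stampF (j + 1) _ a'.1 h2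

theorem thSub_concl_positive (j : ℕ) (a : Sig) (atm : AtomT A) (o : ℕ) :
    ((prenex (A.ruleF (j + 1) atm.1.2 a)).mat.subst (thSub A atm o)).Polarity true := by
  apply QF.polarity_subst
  exact prenex_polarity _ true
    (Fml.polarity_rename _ _ true (Fml.polarity_stampF (j + 1) _ true (A.delta_pos _ a)))

theorem mem_implTheta_of_concl (j : ℕ) (a : Sig) (atm : AtomT A) (o : ℕ) (atm' : AtomT A)
    (h : atm' ∈ ((prenex (A.ruleF (j + 1) atm.1.2 a)).mat.subst (thSub A atm o)).atoms) :
    atm' ∈ (implTheta A j a atm o).atoms :=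
  List.mem_append_right _ h

/-- One stage of the upward (⇐) construction. -/
theorem step_up (α : List Sig) (ν : (ℕ × X) → D) (j : ℕ) (hj : j < α.length) (g : ℕ → D) :
    ∀ (L : List (AtomT A)) (acc : PFT A),
      (∀ j', Sum.inr j' ∈ acc.mat.fv → j' < acc.pre.length) →
      (∀ atm ∈ L, atm.1.1 = j ∧
        ∀ (i : Fin (A.ar atm.1.2)) j', Sum.inr j' ∈ (atm.2 i).vars → j' < acc.pre.length) →
      quantSem acc.pre 0 (fun h => QF.Sat (Istar A α ν) acc.mat (Sum.elim ν h)) g →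
      quantSem (L.foldl (stepAcc A j (α.get ⟨j, hj⟩)) acc).pre 0
        (fun h => QF.Sat (Istar A α ν)
          (L.foldl (stepAcc A j (α.get ⟨j, hj⟩)) acc).mat (Sum.elim ν h)) g := by
  intro L
  induction L with
  | nil => exact fun acc _ _ hq => hq
  | cons atm L ih =>
    intro acc hVB hATM hq
    obtain ⟨⟨j1, q⟩, ts⟩ := atm
    obtain ⟨hstamp, hbound⟩ := hATM ⟨(j1, q), ts⟩ (List.mem_cons_self)
    have hstamp' : j1 = j := hstamp
    subst j1
    rw [List.foldl_cons]
    apply ih (stepAcc A j (α.get ⟨j, hj⟩) acc ⟨(j, q), ts⟩)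
    · intro j' hv
      exact foldl_stepAcc_bound A j (α.get ⟨j, hj⟩) [⟨(j, q), ts⟩] acc hVB
        (by
          intro atm0 hm i j'' hv'
          have he := List.mem_singleton.1 hm
          subst he
          exact hbound i j'' hv') j' hv
    · intro atm0 hm
      obtain ⟨h1, h2⟩ := hATM atm0 (List.mem_cons_of_mem _ hm)
      refine ⟨h1, fun i j'' hv => ?_⟩
      have := h2 i j'' hv
      show j'' < (acc.pre ++ _).length
      rw [List.length_append]
      omega
    · -- the core: one implication block
      show quantSem (acc.pre ++ (prenex (A.ruleF (j + 1) q (α.get ⟨j, hj⟩))).pre) 0 _ g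
      rw [quantSem_append]
      simp only [Nat.zero_add]
      refine quantSem_mono _ _ hq ?_
      intro h _ hsat
      set o := acc.pre.length with ho
      set d : Fin (A.ar q) → D := fun i => (ts i).eval (Sum.elim ν h) with hd
      have haccmat : ∀ h' : ℕ → D, (∀ i < o, h' i = h i) →
          QF.Sat (Istar A α ν) acc.mat (Sum.elim ν h') := by
        intro h' hag'
        refine (QF.sat_congr _ acc.mat (fun v hv => ?_)).2 hsat
        cases v with
        | inl x => rfl
        | inr j' => exact hag' j' (hVB j' hv)
      have hdval : ∀ h' : ℕ → D, (∀ i < o, h' i = h i) →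
          ∀ i, (ts i).eval (Sum.elim ν h') = d i := by
        intro h' hag' i
        apply Term.eval_congr
        intro v hv
        cases v with
        | inl x => rfl
        | inr j' => exact hag' j' (hbound i j' hv)
      by_cases hmem : d ∈ Istar A α ν (j, q)
      · have hsatψ := (mem_Istar_iff A α ν j hj q d).1 hmem
        have hqs := (prenex_sat (Istar A α ν) (A.ruleF (j + 1) q (α.get ⟨j, hj⟩))
          (Sum.elim ν d) o h).2 hsatψ
        refine quantSem_mono _ _ hqs ?_
        intro h' hag' hmat'
        constructor
        · exact haccmat h' hag'
        · rw [implTheta_eq]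
          intro hc
          apply hc.2
          rw [QF.sat_subst,
            thSub_eval A ⟨(j, q), ts⟩ o ν h' d (hdval h' hag')]
          exact hmat'
      · apply quantSem_of_forall
        intro h' hag'
        constructor
        · exact haccmat h' hag'
        · rw [implTheta_eq]
          intro hc
          apply hmem
          have heq : (fun i => (ts i).eval (Sum.elim ν h')) = d :=
            funext fun i => hdval h' hag' i
          exact heq ▸ hc.1

/-- The ⇐ direction : the canonical interpretation satisfies `Θ̂(α)`. -/
theorem theta_of_phi (α : List Sig) (ν : (ℕ × X) → D)
    (hφ : (A.phiHat α).Sat (emptyInterp D) ν) :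
    (A.thetaHat α).Sat (Istar A α ν) ν := by
  have h0 : ((stampF 0 A.init).rename (fun v : Empty => v.elim) :
      Fml D (ℕ × A.Q) (fun p => A.ar p.2) (ℕ × X)).Sat (Istar A α ν) ν :=
    (bridge A α ν).1 hφ
  set g₀ : ℕ → D := fun _ => Classical.arbitrary D with hg₀
  have h1 := (prenex_sat (Istar A α ν)
    ((stampF 0 A.init).rename (fun v : Empty => v.elim)) ν 0 g₀).2 h0
  have h2 : quantSem (A.thetaHatStage α 0).pre 0
      (fun h => QF.Sat (Istar A α ν) (A.thetaHatStage α 0).mat (Sum.elim ν h)) g₀ := by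
    refine quantSem_mono _ _ h1 ?_
    intro h _ hs
    have : (Sum.elim ν fun j : ℕ => h (0 + j)) = Sum.elim ν h := by
      funext v
      cases v with
      | inl x => rfl
      | inr j => show h (0 + j) = h j; rw [Nat.zero_add]
    rw [this] at hs
    exact hs
  have hstage : ∀ i, i ≤ α.length → quantSem (A.thetaHatStage α i).pre 0
      (fun h => QF.Sat (Istar A α ν) (A.thetaHatStage α i).mat (Sum.elim ν h)) g₀ := by
    intro i
    induction i with
    | zero => intro _; exact h2
    | succ i ih =>
      intro hi
      rw [thetaStage_succ A α i (by omega)]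
      apply step_up A α ν i (by omega) g₀
      · exact theta_VB A α i (by omega)
      · intro atm hm
        refine ⟨stamp_of_mem_filter A hm, fun i' j' hv => ?_⟩
        exact theta_VB A α i (by omega) j'
          (QF.atom_vars_sub_fv _ atm (List.mem_filter.1 hm).1 i' hv)
      · exact ih (by omega)
  have hN := hstage α.length le_rfl
  show quantSem (A.thetaHat α).pre 0
    (fun h => QF.Sat (Istar A α ν) (A.thetaHat α).mat (Sum.elim ν h)) g₀
  rw [thetaHat_pre, thetaHat_mat]
  refine quantSem_mono _ _ hN ?_
  intro h _ hs
  apply foldl_finStep_intro A _ _ _ _ hs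
  intro atm hm hF hpred
  have hstamp := stamp_of_mem_filter A hm
  obtain ⟨⟨j1, q⟩, ts⟩ := atm
  have hstamp' : j1 = α.length := hstamp
  subst j1
  exact not_mem_Istar_final A α ν q hF _ hpred

end Aux6

end FOADA

namespace FOADA

section Aux7

set_option linter.unusedSectionVars false

variable {Sig X D : Type} [Nonempty D] (A : FOAA Sig X D)

/-- The ⇒ direction : any model of `Θ̂(α)` yields satisfaction of `Φ̂(α)`. -/
theorem phi_of_theta (α : List Sig) (ν : (ℕ × X) → D)
    (I : Interp D (ℕ × A.Q) (fun p => A.ar p.2))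
    (hsat : (A.thetaHat α).Sat I ν) :
    (A.phiHat α).Sat (emptyInterp D) ν := by
  set g₀ : ℕ → D := fun _ => Classical.arbitrary D with hg₀
  have hsat' : quantSem (A.thetaHat α).pre 0
      (fun h => QF.Sat I (A.thetaHat α).mat (Sum.elim ν h)) g₀ := hsat
  have hpins : ∀ h h' : ℕ → D, (∀ i < 0 + (A.thetaHat α).pre.length, h i = h' i) →
      QF.Sat I (A.thetaHat α).mat (Sum.elim ν h) →
      QF.Sat I (A.thetaHat α).mat (Sum.elim ν h') := by
    intro h h' hag hs
    refine (QF.sat_congr I _ (fun v hv => ?_)).1 hs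
    cases v with
    | inl x => rfl
    | inr j' =>
      have hb := thetaHat_VB A α j' hv
      exact hag j' (by omega)
  obtain ⟨σ, hcσ, hplays⟩ := quantSem_strategy (A.thetaHat α).pre 0 _ g₀ hsat' hpins
  -- the main downward induction
  have claim : ∀ m j, j + m = α.length →
      ∀ atm ∈ ((A.thetaHatStage α j).mat.atoms.filter fun atm => atm.1.1 == j),
      ∀ f, Cons (A.thetaHat α).pre 0 σ g₀ f →
      (fun i => (atm.2 i).eval (Sum.elim ν f)) ∈ I atm.1 →
      (fun i => (atm.2 i).eval (Sum.elim ν f)) ∈ Istar A α ν atm.1 := by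
    intro m
    induction m with
    | zero =>
      intro j hj atm hmem f hf hI
      have hj' : j = α.length := by omega
      subst hj'
      have hstamp := stamp_of_mem_filter A hmem
      obtain ⟨⟨j1, q⟩, ts⟩ := atm
      have hstamp' : j1 = α.length := hstamp
      subst j1
      by_cases hF : q ∈ A.F
      · exact mem_Istar_final_of_F A α ν q hF _
      · exfalso
        have hmat : QF.Sat I (((A.thetaHatN α).mat.atoms.filter
            fun atm => atm.1.1 == α.length).foldl (finStep A) (A.thetaHatN α).mat)
            (Sum.elim ν f) := by
          have := hplays f hf
          rwa [thetaHat_mat] at this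
        exact foldl_finStep_obl A _ _ ⟨(α.length, q), ts⟩ hmem hF I (Sum.elim ν f) hmat hI
    | succ m ihm =>
      intro j hj atm hmem f hf hI
      have hjlt : j < α.length := by omega
      have hstamp := stamp_of_mem_filter A hmem
      obtain ⟨⟨j1, q⟩, ts⟩ := atm
      have hstamp' : j1 = j := hstamp
      subst j1
      set a := α.get ⟨j, hjlt⟩ with ha
      obtain ⟨o, ho1, ho2, ho3, ho4⟩ := foldl_stepAcc_obl A j a
        ((A.thetaHatStage α j).mat.atoms.filter fun atm => atm.1.1 == j)
        (A.thetaHatStage α j) ⟨(j, q), ts⟩ hmem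
      rw [← thetaStage_succ A α j hjlt] at ho2 ho3 ho4
      obtain ⟨⟨ext, hext⟩, hent⟩ := theta_lift A α m (j + 1) (by omega)
      set d : Fin (A.ar q) → D := fun i => (ts i).eval (Sum.elim ν f) with hd
      show d ∈ Istar A α ν (j, q)
      rw [mem_Istar_iff A α ν j hjlt q d]
      rw [← prenex_sat (Istar A α ν) (A.ruleF (j + 1) q a) (Sum.elim ν d) o f]
      set bl := (prenex (A.ruleF (j + 1) q a)).pre.length with hbl
      apply strategy_quantSem _ o _ f σ hcσ
      intro hh hhcons
      set f' := follow σ (A.thetaHat α).pre (o + bl) hh with hf'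
      have hagree1 : ∀ i < o + bl, f' i = hh i := fun i hi =>
        follow_base σ _ _ hh i (by omega)
      have hagree2 : ∀ i < o, f' i = f i := fun i hi => by
        rw [hagree1 i (by omega)]
        exact hhcons.1 i hi
      have hf'cons : Cons (A.thetaHat α).pre 0 σ g₀ f' := by
        constructor
        · intro i hi; omega
        · intro jj hjj
          simp only [Nat.zero_add]
          by_cases hcase : o + bl ≤ jj
          · exact follow_sigma σ _ _ hh hcσ jj hcase hjj
          · by_cases hcase2 : jj < o
            · rw [hagree2 jj hcase2]
              have h1 := hf.2 jj hjj
              rw [Nat.zero_add] at h1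
              rw [h1]
              exact hcσ jj f f' fun i hi => (hagree2 i (by omega)).symm
            · push_neg at hcase hcase2
              have hbget : (prenex (A.ruleF (j + 1) q a)).pre[jj - o]? = some true := by
                have hb1 := ho2 (jj - o) (by omega)
                -- hb1 : (stage (j+1)).pre[o + (jj - o)]? = bpre[jj - o]?
                rw [show o + (jj - o) = jj from by omega] at hb1
                -- position jj is inside (stage (j+1)).pre :
                have hlt : jj < (A.thetaHatStage α (j + 1)).pre.length := by
                  by_contra hno
                  push_neg at hno
                  rw [List.getElem?_eq_none (by omega)] at hb1
                  have hsome : ∃ b, (prenex (A.ruleF (j + 1) q a)).pre[jj - o]?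
                      = some b := by
                    exact ⟨_, List.getElem?_eq_getElem (by omega)⟩
                  obtain ⟨b, hb⟩ := hsome
                  rw [hb] at hb1
                  cases hb1
                have hgj : (A.thetaHatStage α (j + 1)).pre[jj]? = some true := by
                  have : (A.thetaHat α).pre[jj]? =
                      (A.thetaHatStage α (j + 1)).pre[jj]? := by
                    rw [thetaHat_pre, hext,
                      List.getElem?_append_left hlt]
                  rw [← this]
                  exact hjj
                rw [← hb1, hgj]
              rw [hagree1 jj (by omega)]
              have h2 := hhcons.2 (jj - o) hbget
              rw [show o + (jj - o) = jj from by omega] at h2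
              rw [h2]
              exact hcσ jj hh f' fun i hi => (hagree1 i (by omega)).symm
      have hsatf' := hplays f' hf'cons
      rw [thetaHat_mat] at hsatf'
      have hmatN : QF.Sat I (A.thetaHatN α).mat (Sum.elim ν f') :=
        foldl_finStep_entail A _ _ I _ hsatf'
      have himpl := ho3 I (Sum.elim ν f') (hent I _ hmatN)
      have hdval : ∀ i, (ts i).eval (Sum.elim ν f') = d i := by
        intro i
        apply Term.eval_congr
        intro v hv
        cases v with
        | inl x => rfl
        | inr j' =>
          have hb : j' < (A.thetaHatStage α j).pre.length :=
            theta_VB A α j (by omega) j'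
              (QF.atom_vars_sub_fv _ ⟨(j, q), ts⟩ (List.mem_filter.1 hmem).1 i hv)
          exact hagree2 j' (by omega)
      have hhyp : QF.Sat I (QF.pred ((j, q) : ℕ × A.Q) ts) (Sum.elim ν f') := by
        show (fun i => (ts i).eval (Sum.elim ν f')) ∈ I ((j, q) : ℕ × A.Q)
        rw [show (fun i => (ts i).eval (Sum.elim ν f')) = d from funext hdval]
        exact hI
      have hconcl : QF.Sat I ((prenex (A.ruleF (j + 1) q a)).mat.subst
          (thSub A ⟨(j, q), ts⟩ o)) (Sum.elim ν f') := by
        by_contra hc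
        rw [implTheta_eq] at himpl
        exact himpl ⟨hhyp, hc⟩
      have hconclStar : QF.Sat (Istar A α ν) ((prenex (A.ruleF (j + 1) q a)).mat.subst
          (thSub A ⟨(j, q), ts⟩ o)) (Sum.elim ν f') := by
        refine (QF.sat_mono _ _ ?_ true (thSub_concl_positive A j a ⟨(j, q), ts⟩ o)).1
          rfl hconcl
        intro atm' hm' hIval
        have hm'' : atm' ∈ (implTheta A j a ⟨(j, q), ts⟩ o).atoms :=
          mem_implTheta_of_concl A j a ⟨(j, q), ts⟩ o atm' hm'
        have hmemN := ho4 atm' hm''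
        have hstamp' : atm'.1.1 = j + 1 := thSub_concl_atoms_stamp A j a ⟨(j, q), ts⟩ o atm' hm'
        exact ihm (j + 1) (by omega) atm'
          (mem_filter_stamp A hmemN hstamp') f' hf'cons hIval
      rw [QF.sat_subst, thSub_eval A ⟨(j, q), ts⟩ o ν f' d hdval] at hconclStar
      refine (QF.sat_congr _ _ (fun v hv => ?_)).1 hconclStar
      cases v with
      | inl x => rfl
      | inr jj =>
        have hb := prenex_fv_bound (A.ruleF (j + 1) q a) jj hv
        show f' (o + jj) = hh (o + jj)
        exact hagree1 (o + jj) (by omega)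
  -- assemble : play on the initial block
  have hfinal : quantSem (A.thetaHatStage α 0).pre 0
      (fun h => QF.Sat (Istar A α ν) (A.thetaHatStage α 0).mat (Sum.elim ν h)) g₀ := by
    apply strategy_quantSem _ 0 _ g₀ σ hcσ
    intro h hcons0
    set f' := follow σ (A.thetaHat α).pre (A.thetaHatStage α 0).pre.length h with hf'
    have hagree : ∀ i < (A.thetaHatStage α 0).pre.length, f' i = h i := fun i hi =>
      follow_base σ _ _ h i (by omega)
    obtain ⟨ext, hext⟩ : ∃ ext, (A.thetaHat α).pre = (A.thetaHatStage α 0).pre ++ ext := by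
      obtain ⟨ext, he⟩ := (theta_lift A α α.length 0 (by omega)).1
      exact ⟨ext, by rw [thetaHat_pre]; exact he⟩
    have hf'cons : Cons (A.thetaHat α).pre 0 σ g₀ f' := by
      apply cons_follow σ _ _ h g₀ hcσ
      intro jj hjj hget
      have hget0 : (A.thetaHatStage α 0).pre[jj]? = some true := by
        rw [hext, List.getElem?_append_left hjj] at hget
        exact hget
      have h2 := hcons0.2 jj hget0
      rwa [Nat.zero_add] at h2
    have hsatf' := hplays f' hf'cons
    rw [thetaHat_mat] at hsatf'
    have hmatN := foldl_finStep_entail A _ _ I _ hsatf'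
    have hmat0 : QF.Sat I (A.thetaHatStage α 0).mat (Sum.elim ν f') :=
      (theta_lift A α α.length 0 (by omega)).2 I _ hmatN
    have hstar : QF.Sat (Istar A α ν) (A.thetaHatStage α 0).mat (Sum.elim ν f') := by
      refine (QF.sat_mono _ _ ?_ true (stage_zero_positive A α)).1 rfl hmat0
      intro atm hm hIv
      exact claim α.length 0 (by omega) atm
        (mem_filter_stamp A hm (stage_zero_atoms_stamp A α atm hm)) f' hf'cons hIv
    refine (QF.sat_congr _ _ (fun v hv => ?_)).1 hstar
    cases v with
    | inl x => rfl
    | inr jj => exact hagree jj (theta_VB A α 0 (by omega) jj hv)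
  rw [bridge A α ν]
  rw [← prenex_sat (Istar A α ν) ((stampF 0 A.init).rename fun v : Empty => v.elim) ν 0 g₀]
  refine quantSem_mono _ _ hfinal ?_
  intro h _ hs
  rw [show (Sum.elim ν fun j : ℕ => h (0 + j)) = Sum.elim ν h from funext fun v => by
    cases v with
    | inl x => rfl
    | inr j => show h (0 + j) = h j; rw [Nat.zero_add]]
  exact hs

end Aux7

end FOADA

namespace FOADA

/-- Lemma 4. -/
theorem statement_5 {Sig X D : Type} [Finite Sig] [Finite X] [Infinite D] [Nonempty D]
    (A : FOAA Sig X D) (α : List Sig) (ν : (ℕ × X) → D) :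
    (∃ I : Interp D (ℕ × A.Q) (fun p => A.ar p.2), (A.thetaHat α).Sat I ν) ↔
      (A.phiHat α).Sat (emptyInterp D) ν := by
  constructor
  · rintro ⟨I, hsat⟩
    exact phi_of_theta A α ν I hsat
  · intro h
    exact ⟨Istar A α ν, theta_of_phi A α ν h⟩

end FOADA
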